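/- arXiv:1204.6311 — 10 statements merged into one kernel-verified Lean document; each statement's English description precedes it below -/
import Mathlib

section
/- If |c| < 1, then every point of the complex plane is attracted to the origin under the twisted tent map: for every z ∈ ℂ, the sequence of iterates f_c^n(z) tends to 0 as n → ∞. -/
/-- The twisted tent map with folding line `Im z = -1`. -/
noncomputable def ttm (c : ℂ) (z : ℂ) : ℂ :=
  if -1 ≤ (c * z).im then c * z else (starRingEnd ℂ) (c * z) - 2 * Complex.I

/-- The filled-in Julia set: points with bounded forward orbit. -/
def ttmK (c : ℂ) : Set ℂ :=
  {z : ℂ | Bornology.IsBounded (Set.range fun n : ℕ => (ttm c)^[n] z)}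

lemma ttm_abs_le (c z : ℂ) : ‖ttm c z‖ ≤ ‖c‖ * ‖z‖ := by
  unfold ttm
  split
  · rw [norm_mul]
  · rename_i hlt
    push_neg at hlt
    rw [← norm_mul]
    rw [Complex.norm_def, Complex.norm_def]
    apply Real.sqrt_le_sqrt
    simp only [Complex.normSq_apply, Complex.sub_re, Complex.sub_im, Complex.conj_re,
      Complex.conj_im, Complex.mul_re, Complex.mul_im, Complex.I_re, Complex.I_im,
      Complex.ofReal_re, Complex.ofReal_im]
    norm_num
    rw [Complex.mul_im] at hlt
    nlinarith [hlt]

lemma ttm_iter_abs_le (c z : ℂ) (n : ℕ) :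
    ‖(ttm c)^[n] z‖ ≤ ‖c‖ ^ n * ‖z‖ := by
  induction n with
  | zero => simp
  | succ n ih =>
    rw [Function.iterate_succ_apply']
    calc ‖ttm c ((ttm c)^[n] z)‖ ≤ ‖c‖ * ‖(ttm c)^[n] z‖ :=
          ttm_abs_le _ _
      _ ≤ ‖c‖ * (‖c‖ ^ n * ‖z‖) := by
          exact mul_le_mul_of_nonneg_left ih (norm_nonneg c)
      _ = ‖c‖ ^ (n + 1) * ‖z‖ := by ring

theorem ttm_attracted_to_zero (c : ℂ) (h : ‖c‖ < 1) (z : ℂ) :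
    Filter.Tendsto (fun n : ℕ => (ttm c)^[n] z) Filter.atTop (nhds 0) := by
  rw [tendsto_zero_iff_norm_tendsto_zero]
  have hlim : Filter.Tendsto (fun n : ℕ => ‖c‖ ^ n * ‖z‖)
      Filter.atTop (nhds 0) := by
    have := (tendsto_pow_atTop_nhds_zero_of_lt_one (norm_nonneg c) h).mul_const
      ‖z‖
    simpa using this
  refine squeeze_zero (fun n => norm_nonneg _) (fun n => ?_) hlim
  exact ttm_iter_abs_le c z n
end

section
/- Suppose |c| = 1 and c is not a root of unity (i.e. c^n ≠ 1 for every integer n ≥ 1). Then for every z ∈ ℂ there exists a point q ∈ ℂ with |q| ≤ 1 such that |f_c^n(z) - f_c^n(q)| → 0 as n → ∞. -/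
open Complex Filter


lemma circle_exp_zsmul (s : ℝ) (n : ℤ) : Circle.exp ((n : ℤ) • s) = Circle.exp s ^ n := by
  exact_mod_cast (map_zsmul Circle.expHom n s)

lemma dense_pow_circle (x : Circle) (hx : ∀ n : ℕ, 1 ≤ n → x ^ n ≠ 1) :
    DenseRange (x ^ · : ℕ → Circle) := by
  rw [← denseRange_zpow_iff_pow]
  have hzp : DenseRange (x ^ · : ℤ → Circle) ↔
      Dense ((Subgroup.zpowers x : Subgroup Circle) : Set Circle) := by
    unfold DenseRange
    rw [← Subgroup.coe_zpowers]
  rw [hzp]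
  set θ : ℝ := Complex.arg x with hθ
  have hexpθ : Circle.exp θ = x := Circle.exp_arg x
  set S : AddSubgroup ℝ := AddSubgroup.closure {θ, 2 * Real.pi} with hS
  rcases S.dense_or_cyclic with hd | ⟨a, ha⟩
  · -- dense case
    set T : AddSubgroup ℝ :=
      { carrier := {s : ℝ | Circle.exp s ∈ Subgroup.zpowers x}
        zero_mem' := by simp [Circle.exp_zero, one_mem]
        add_mem' := by
          intro s t hs ht
          simp only [Set.mem_setOf_eq, Circle.exp_add] at *
          exact mul_mem hs ht
        neg_mem' := by
          intro s hs
          simp only [Set.mem_setOf_eq, Circle.exp_neg] at *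
          exact inv_mem hs } with hT
    have hsub : ∀ s ∈ S, Circle.exp s ∈ Subgroup.zpowers x := by
      intro s hs
      have hle : S ≤ T := by
        rw [hS]
        refine (AddSubgroup.closure_le _).2 ?_
        rintro t (h | h)
        · subst h
          refine SetLike.mem_coe.2 ?_
          show Circle.exp θ ∈ Subgroup.zpowers x
          rw [hexpθ]; exact Subgroup.mem_zpowers x
        · simp only [Set.mem_singleton_iff] at h
          subst h
          refine SetLike.mem_coe.2 ?_
          show Circle.exp (2 * Real.pi) ∈ Subgroup.zpowers x
          rw [Circle.exp_two_pi]; exact one_mem _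
      exact hle hs
    intro y
    have hy : y = Circle.exp (Complex.arg y) := (Circle.exp_arg y).symm
    have h1 : Circle.exp (Complex.arg y) ∈ Circle.exp '' closure (S : Set ℝ) :=
      ⟨Complex.arg y, by rw [hd.closure_eq]; trivial, rfl⟩
    have h2 : Circle.exp '' closure (S : Set ℝ) ⊆
        closure (Circle.exp '' (S : Set ℝ)) :=
      image_closure_subset_closure_image Circle.exp.continuous
    have h3 : closure (Circle.exp '' (S : Set ℝ)) ⊆
        closure ((Subgroup.zpowers x : Subgroup Circle) : Set Circle) := by
      apply closure_mono
      rintro _ ⟨s, hs, rfl⟩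
      exact hsub s hs
    rw [hy]
    exact h3 (h2 h1)
  · -- cyclic case : contradiction
    exfalso
    have hθS : θ ∈ S := AddSubgroup.subset_closure (by simp)
    have hπS : (2 * Real.pi) ∈ S := AddSubgroup.subset_closure (by simp)
    rw [ha, AddSubgroup.mem_closure_singleton] at hθS hπS
    obtain ⟨m, hm⟩ := hθS
    obtain ⟨n, hn⟩ := hπS
    have hn0 : n ≠ 0 := by
      rintro rfl
      simp only [zero_smul] at hn
      exact Real.two_pi_pos.ne (by linarith)
    have hxn : x ^ (n : ℤ) = 1 := by
      have hsm : (n : ℤ) • θ = m • (n • a) := by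
        rw [← hm, smul_comm]
      calc x ^ (n:ℤ) = Circle.exp ((n:ℤ) • θ) := by rw [circle_exp_zsmul, hexpθ]
        _ = Circle.exp (m • (2*Real.pi)) := by rw [hsm, hn]
        _ = 1 := by
            rw [zsmul_eq_mul]
            exact Circle.exp_int_mul_two_pi m
    have habs : x ^ (n.natAbs) = 1 := by
      rcases Int.natAbs_eq n with h | h
      · rw [← zpow_natCast, ← h, hxn]
      · rw [h, zpow_neg, zpow_natCast, inv_eq_one] at hxn
        exact hxn
    exact hx n.natAbs (by omega) habs

lemma pow_approx (c : ℂ) (h1 : ‖c‖ = 1) (h2 : ∀ n : ℕ, 1 ≤ n → c ^ n ≠ 1)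
    (v : ℂ) (hv : ‖v‖ = 1) {ε : ℝ} (hε : 0 < ε) :
    ∃ k : ℕ, ‖c ^ k - v‖ < ε := by
  have hcmem : c ∈ Submonoid.unitSphere ℂ := by
    simpa [Submonoid.unitSphere] using h1
  set x : Circle := ⟨c, hcmem⟩ with hxdef
  have hx : ∀ n : ℕ, 1 ≤ n → x ^ n ≠ 1 := by
    intro n hn he
    apply h2 n hn
    calc c ^ n = ((x ^ n : Circle) : ℂ) := by norm_cast
      _ = 1 := by rw [he]; rfl
  have hd := dense_pow_circle x hx
  have hvmem : v ∈ Submonoid.unitSphere ℂ := by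
    simpa [Submonoid.unitSphere] using hv
  set y : Circle := ⟨v, hvmem⟩ with hydef
  have hy : y ∈ closure (Set.range (x ^ · : ℕ → Circle)) := hd y
  rw [Metric.mem_closure_iff] at hy
  obtain ⟨b, ⟨k, rfl⟩, hb⟩ := hy ε hε
  refine ⟨k, ?_⟩
  have : dist y (x ^ k) = ‖v - c ^ k‖ := by
    erw [Subtype.dist_eq]
    exact Complex.dist_eq _ _
  rw [this] at hb
  rwa [← norm_neg, neg_sub]

lemma abs_mul_eq (c x : ℂ) (h1 : ‖c‖ = 1) : ‖c * x‖ = ‖x‖ := by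
  rw [norm_mul, h1, one_mul]

lemma ttm_dist_sq (c : ℂ) (h1 : ‖c‖ = 1) (x : ℂ) :
    ‖ttm c x - c * x‖ = ((‖x‖)^2 - (‖ttm c x‖)^2) / 2 := by
  unfold ttm
  set u := c * x with hu
  have habs : ‖u‖ = ‖x‖ := abs_mul_eq c x h1
  split_ifs with h
  · simp [habs]
  · push_neg at h
    have heq : (starRingEnd ℂ) u - 2 * Complex.I - u = ((-2*u.im - 2 : ℝ)) * Complex.I := by
      apply Complex.ext <;> simp <;> ring
    rw [heq]
    have h2 : ‖((-2*u.im - 2 : ℝ)) * Complex.I‖ = -2*u.im - 2 := by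
      rw [norm_mul, Complex.norm_I, Complex.norm_real, Real.norm_eq_abs, mul_one, _root_.abs_of_nonneg (by linarith)]
    rw [h2]
    have h3 : (‖(starRingEnd ℂ) u - 2 * Complex.I‖)^2
        = u.re^2 + (-u.im - 2)^2 := by
      rw [Complex.sq_norm, Complex.normSq_apply]
      simp
      ring
    rw [h3, ← habs, Complex.sq_norm, Complex.normSq_apply]
    ring

lemma ttm_abs_le_s2 (c : ℂ) (h1 : ‖c‖ = 1) (x : ℂ) :
    ‖ttm c x‖ ≤ ‖x‖ := by
  have h := ttm_dist_sq c h1 x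
  have h0 : 0 ≤ ‖ttm c x - c * x‖ := norm_nonneg _
  rw [h] at h0
  have hsq : (‖ttm c x‖)^2 ≤ (‖x‖)^2 := by linarith
  have := Real.sqrt_le_sqrt hsq
  rwa [Real.sqrt_sq (norm_nonneg _), Real.sqrt_sq (norm_nonneg _)] at this

lemma ttm_im_ge (c x : ℂ) : -1 ≤ (ttm c x).im := by
  unfold ttm
  split_ifs with h
  · exact h
  · push_neg at h
    have heq : ((starRingEnd ℂ) (c*x) - 2*Complex.I).im = -(c*x).im - 2 := by
      simp; ring
    rw [heq]
    linarith

lemma ttm_of_abs_le_one (c x : ℂ) (h1 : ‖c‖ = 1) (hx : ‖x‖ ≤ 1) :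
    ttm c x = c * x := by
  unfold ttm
  rw [if_pos]
  have h2 : |(c*x).im| ≤ ‖c*x‖ := Complex.abs_im_le_norm _
  rw [abs_mul_eq c x h1] at h2
  have := abs_le.1 (le_trans h2 hx)
  linarith [this.1]

lemma ttm_iter_disk (c q : ℂ) (h1 : ‖c‖ = 1) (hq : ‖q‖ ≤ 1) (n : ℕ) :
    (ttm c)^[n] q = c ^ n * q := by
  induction n with
  | zero => simp
  | succ n ih =>
    rw [Function.iterate_succ_apply', ih, ttm_of_abs_le_one c _ h1, pow_succ]
    · ring
    · rw [abs_mul_eq _ q _]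
      · exact hq
      · rw [norm_pow, h1, one_pow]

lemma ttm_lipschitz (c a b : ℂ) (h1 : ‖c‖ = 1) :
    ‖ttm c a - ttm c b‖ ≤ ‖a - b‖ := by
  have key : ∀ u v : ℂ, -1 ≤ u.im → v.im < -1 →
      ‖u - ((starRingEnd ℂ) v - 2 * Complex.I)‖ ≤ ‖u - v‖ := by
    intro u v hu hv
    have h2 : (‖u - ((starRingEnd ℂ) v - 2 * Complex.I)‖)^2
        ≤ (‖u - v‖)^2 := by
      rw [Complex.sq_norm, Complex.sq_norm, Complex.normSq_apply, Complex.normSq_apply]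
      simp only [Complex.sub_re, Complex.sub_im, Complex.conj_re, Complex.conj_im,
        Complex.mul_re, Complex.mul_im, Complex.I_re, Complex.I_im]
      simp
      nlinarith [mul_nonneg (by linarith : (0:ℝ) ≤ u.im + 1) (by linarith : (0:ℝ) ≤ -v.im - 1)]
    have := Real.sqrt_le_sqrt h2
    rwa [Real.sqrt_sq (norm_nonneg _), Real.sqrt_sq (norm_nonneg _)] at this
  have habssub : ‖c*a - c*b‖ = ‖a - b‖ := by
    rw [← mul_sub, abs_mul_eq _ _ h1]
  unfold ttm
  split_ifs with h h' h'
  · rw [habssub]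
  · push_neg at h'
    rw [← habssub]
    exact key (c*a) (c*b) h h'
  · push_neg at h
    rw [← norm_neg, neg_sub, ← habssub, ← norm_neg (c*a - c*b), neg_sub]
    exact key (c*b) (c*a) h' h
  · push_neg at h h'
    have : (starRingEnd ℂ) (c*a) - 2*Complex.I - ((starRingEnd ℂ) (c*b) - 2*Complex.I)
        = (starRingEnd ℂ) (c*a - c*b) := by
      rw [map_sub]; ring
    rw [this, ← habssub]
    rw [Complex.norm_conj]

lemma ttm_iter_lipschitz (c a b : ℂ) (h1 : ‖c‖ = 1) (n : ℕ) :
    ‖(ttm c)^[n] a - (ttm c)^[n] b‖ ≤ ‖a - b‖ := by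
  induction n with
  | zero => simp
  | succ n ih =>
    rw [Function.iterate_succ_apply', Function.iterate_succ_apply']
    exact le_trans (ttm_lipschitz c _ _ h1) ih

lemma ttm_pseudo (c z : ℂ) (h1 : ‖c‖ = 1) (N k : ℕ) :
    ‖(ttm c)^[N+k] z - c^k * (ttm c)^[N] z‖
      ≤ ((‖(ttm c)^[N] z‖)^2 - (‖(ttm c)^[N+k] z‖)^2) / 2 := by
  induction k with
  | zero => simp
  | succ k ih =>
    have hsplit : (ttm c)^[N+(k+1)] z - c^(k+1) * (ttm c)^[N] z
        = (ttm c ((ttm c)^[N+k] z) - c * ((ttm c)^[N+k] z))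
          + c * ((ttm c)^[N+k] z - c^k * (ttm c)^[N] z) := by
      rw [show N+(k+1) = (N+k)+1 by ring, Function.iterate_succ_apply', pow_succ]
      ring
    rw [hsplit]
    calc ‖_‖ ≤ ‖ttm c ((ttm c)^[N+k] z) - c * ((ttm c)^[N+k] z)‖
          + ‖c * ((ttm c)^[N+k] z - c^k * (ttm c)^[N] z)‖ := norm_add_le _ _
      _ ≤ ((‖(ttm c)^[N+k] z‖)^2 - (‖ttm c ((ttm c)^[N+k] z)‖)^2) / 2
          + ((‖(ttm c)^[N] z‖)^2 - (‖(ttm c)^[N+k] z‖)^2) / 2 := by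
          rw [ttm_dist_sq c h1 ((ttm c)^[N+k] z), abs_mul_eq _ _ h1]
          exact add_le_add le_rfl ih
      _ = ((‖(ttm c)^[N] z‖)^2 - (‖(ttm c)^[N+(k+1)] z‖)^2) / 2 := by
          rw [show N+(k+1) = (N+k)+1 by ring, Function.iterate_succ_apply']
          ring

theorem ttm_irrational_rotation_shadow (c : ℂ) (h1 : ‖c‖ = 1)
    (h2 : ∀ n : ℕ, 1 ≤ n → c ^ n ≠ 1) (z : ℂ) :
    ∃ q : ℂ, ‖q‖ ≤ 1 ∧
      Filter.Tendsto (fun n : ℕ => ‖(ttm c)^[n] z - (ttm c)^[n] q‖)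
        Filter.atTop (nhds 0) := by
  have hc0 : c ≠ 0 := by
    intro h; rw [h] at h1; simp at h1
  set w : ℕ → ℂ := fun n => (ttm c)^[n] z with hw
  set r : ℕ → ℝ := fun n => ‖w n‖ with hrdef
  have hr0 : ∀ n, 0 ≤ r n := fun n => norm_nonneg _
  have hr_anti : Antitone r := by
    apply antitone_nat_of_succ_le
    intro n
    show ‖w (n+1)‖ ≤ ‖w n‖
    have : w (n+1) = ttm c (w n) := Function.iterate_succ_apply' _ _ _
    rw [this]
    exact ttm_abs_le_s2 c h1 _
  have hbdd : BddBelow (Set.range r) := ⟨0, by rintro _ ⟨n, rfl⟩; exact hr0 n⟩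
  set l : ℝ := ⨅ n, r n with hl
  have htends : Tendsto r atTop (nhds l) := tendsto_atTop_ciInf hr_anti hbdd
  have hrl : ∀ n, l ≤ r n := fun n => ciInf_le hbdd n
  have hl0 : 0 ≤ l := le_ciInf hr0
  -- step 1 : l ≤ 1
  have hl1 : l ≤ 1 := by
    by_contra hlgt
    push_neg at hlgt
    set δ : ℝ := l - 1 with hδ
    have hδ0 : 0 < δ := by simp [hδ]; linarith
    have hsq : Tendsto (fun n => (r n)^2) atTop (nhds (l^2)) := htends.pow 2
    have hev : ∀ᶠ n in atTop, (r n)^2 < l^2 + δ/2 :=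
      hsq.eventually (gt_mem_nhds (by linarith))
    obtain ⟨N, hN, hN1⟩ := (hev.and (eventually_ge_atTop 1)).exists
    have hrNpos : 0 < r N := lt_of_lt_of_le (by linarith) (hrl N)
    have hwN0 : w N ≠ 0 := by
      intro h
      rw [hrdef] at hrNpos
      simp only [h, norm_zero] at hrNpos
      exact lt_irrefl 0 hrNpos
    -- density target
    set v : ℂ := (-Complex.I * (r N : ℝ)) / w N with hv
    have hvabs : ‖v‖ = 1 := by
      rw [hv, norm_div, norm_mul]
      simp only [norm_neg, Complex.norm_I, Complex.norm_real, Real.norm_eq_abs, one_mul]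
      rw [_root_.abs_of_nonneg (hr0 N)]
      show r N / r N = 1
      field_simp
    have hε' : 0 < δ / (4 * r N) := by positivity
    obtain ⟨k, hk⟩ := pow_approx c h1 h2 v hvabs hε'
    have hclose : ‖c^k * w N - (-Complex.I * (r N : ℝ))‖ < δ/4 := by
      have : c^k * w N - (-Complex.I * (r N : ℝ)) = (c^k - v) * w N := by
        rw [hv, sub_mul, div_mul_cancel₀ _ hwN0]
      rw [this, norm_mul]
      have h5 : ‖w N‖ = r N := rfl
      rw [h5]
      calc ‖c^k - v‖ * r N < (δ / (4 * r N)) * r N :=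
            mul_lt_mul_of_pos_right hk hrNpos
        _ = δ/4 := by field_simp
    -- pseudo orbit bound
    have hpseudo : ‖w (N+k) - c^k * w N‖ ≤ ((r N)^2 - (r (N+k))^2)/2 :=
      ttm_pseudo c z h1 N k
    have hps2 : ((r N)^2 - (r (N+k))^2)/2 < δ/4 := by
      have h3 : l ≤ r (N+k) := hrl _
      have h4 : l^2 ≤ (r (N+k))^2 := by nlinarith
      nlinarith [hN]
    -- imaginary part estimate
    have him : (w (N+k)).im < -1 := by
      have e2 : (w (N+k)).im + r N ≤ ‖w (N+k) - (-Complex.I * (r N : ℝ))‖ := by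
        have h6 : (w (N+k) - (-Complex.I * (r N : ℝ))).im = (w (N+k)).im + r N := by simp
        calc (w (N+k)).im + r N = (w (N+k) - (-Complex.I * (r N:ℝ))).im := h6.symm
          _ ≤ |(w (N+k) - (-Complex.I * (r N:ℝ))).im| := le_abs_self _
          _ ≤ _ := Complex.abs_im_le_norm _
      have e3 : ‖w (N+k) - (-Complex.I * (r N : ℝ))‖
          ≤ ‖w (N+k) - c^k * w N‖
            + ‖c^k * w N - (-Complex.I * (r N : ℝ))‖ := by
        have h7 : w (N+k) - (-Complex.I * (r N:ℝ))
            = (w (N+k) - c^k * w N) + (c^k * w N - (-Complex.I*(r N:ℝ))) := by ring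
        rw [h7]
        exact norm_add_le _ _
      have hrN_ge : l ≤ r N := hrl N
      linarith [hpseudo, hps2, hclose, e2, e3]
    -- but imaginary parts are ≥ -1 after at least one step
    have him2 : -1 ≤ (w (N+k)).im := by
      obtain ⟨M, rfl⟩ : ∃ M, N = M + 1 := ⟨N - 1, by omega⟩
      have : w (M+1+k) = ttm c ((ttm c)^[M+k] z) := by
        rw [hw]
        show (ttm c)^[M+1+k] z = _
        rw [show M+1+k = (M+k)+1 by ring, Function.iterate_succ_apply']
      rw [this]
      exact ttm_im_ge c _
    linarith
  -- step 2 : the approximating points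
  set m : ℕ → ℝ := fun n => max (r n) 1 with hm
  have hm1 : ∀ n, 1 ≤ m n := fun n => le_max_right _ _
  have hm0 : ∀ n, m n ≠ 0 := fun n => by have := hm1 n; positivity
  set q' : ℕ → ℂ := fun n => w n / (m n : ℝ) with hq'
  set qs : ℕ → ℂ := fun n => q' n / c^n with hqs
  have hq'abs : ∀ n, ‖q' n‖ ≤ 1 := by
    intro n
    rw [hq', norm_div]
    simp only [Complex.norm_real, Real.norm_eq_abs]
    rw [_root_.abs_of_pos (by linarith [hm1 n])]
    rw [div_le_one (by linarith [hm1 n])]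
    exact le_max_left _ _
  have hqsabs : ∀ n, ‖qs n‖ ≤ 1 := by
    intro n
    rw [hqs, norm_div, norm_pow, h1, one_pow, div_one]
    exact hq'abs n
  have hdiff : ∀ N, ‖w N - q' N‖ = max (r N - 1) 0 := by
    intro N
    rcases le_or_gt (r N) 1 with h | h
    · have hmN : m N = 1 := max_eq_right h
      have : q' N = w N := by rw [hq']; simp [hmN]
      rw [this, sub_self, norm_zero, max_eq_right (by linarith)]
    · have hmN : m N = r N := max_eq_left h.le
      have hrpos : (0:ℝ) < r N := by linarith
      have hq'N : q' N = w N / ((r N : ℝ) : ℂ) := by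
        simp only [hq', hmN]
      have : w N - q' N = w N * (1 - ((r N : ℝ) : ℂ)⁻¹) := by
        rw [hq'N]
        field_simp
      rw [this, norm_mul]
      have : ‖1 - ((r N : ℝ) : ℂ)⁻¹‖ = 1 - (r N)⁻¹ := by
        rw [show (1 - ((r N : ℝ) : ℂ)⁻¹) = (((1 - (r N)⁻¹ : ℝ) : ℂ)) by push_cast; ring]
        rw [Complex.norm_real, Real.norm_eq_abs, _root_.abs_of_nonneg]
        have : (r N)⁻¹ ≤ 1 := by
          rw [inv_le_one_iff₀]; right; linarith
        linarith
      rw [this]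
      show r N * _ = _
      rw [max_eq_left (by linarith)]
      field_simp
  -- tail bound
  have htail : ∀ N n, N ≤ n →
      ‖w n - (ttm c)^[n] (qs N)‖ ≤ max (r N - 1) 0 := by
    intro N n hNn
    have hiter : (ttm c)^[n] (qs N) = (ttm c)^[n-N] (q' N) := by
      rw [ttm_iter_disk c _ h1 (hqsabs N) n, ttm_iter_disk c _ h1 (hq'abs N) (n-N)]
      have hcn : c ^ (n - N) * c ^ N = c ^ n := by
        rw [← pow_add]; congr 1; omega
      have hqN : qs N = q' N / c ^ N := by simp only [hqs]
      rw [hqN, ← hcn]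
      field_simp
    have hwn : w n = (ttm c)^[n-N] (w N) := by
      have h8 := Function.iterate_add_apply (ttm c) (n-N) N z
      rw [show n - N + N = n by omega] at h8
      exact h8
    rw [hiter, hwn, ← hdiff N]
    exact ttm_iter_lipschitz c _ _ h1 _
  -- limit of the bound is 0
  have hmax0 : Tendsto (fun n => max (r n - 1) 0) atTop (nhds 0) := by
    have : Tendsto (fun n => max (r n - 1) 0) atTop (nhds (max (l - 1) 0)) :=
      Tendsto.max (htends.sub_const 1) tendsto_const_nhds
    rwa [max_eq_right (by linarith)] at this
  -- compactness
  have hqsball : ∀ n, qs n ∈ Metric.closedBall (0:ℂ) 1 := by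
    intro n
    rw [Metric.mem_closedBall, Complex.dist_eq, sub_zero]
    exact hqsabs n
  obtain ⟨q, hqball, φ, hφ, hqlim⟩ :=
    (isCompact_closedBall (0:ℂ) 1).tendsto_subseq hqsball
  have hqabs : ‖q‖ ≤ 1 := by
    rw [Metric.mem_closedBall, Complex.dist_eq, sub_zero] at hqball
    exact hqball
  refine ⟨q, hqabs, ?_⟩
  rw [Metric.tendsto_atTop]
  intro ε hε
  have hev1 : ∀ᶠ j in atTop, max (r (φ j) - 1) 0 < ε/2 :=
    (hmax0.comp hφ.tendsto_atTop).eventually (gt_mem_nhds (by linarith))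
  have hev2 : ∀ᶠ j in atTop, dist (qs (φ j)) q < ε/2 :=
    Metric.tendsto_nhds.mp hqlim (ε/2) (by linarith)
  obtain ⟨j, hj1, hj2⟩ := (hev1.and hev2).exists
  refine ⟨φ j, fun n hn => ?_⟩
  rw [Real.dist_eq, sub_zero, _root_.abs_of_nonneg (norm_nonneg _)]
  calc ‖(ttm c)^[n] z - (ttm c)^[n] q‖
      ≤ ‖(ttm c)^[n] z - (ttm c)^[n] (qs (φ j))‖
        + ‖(ttm c)^[n] (qs (φ j)) - (ttm c)^[n] q‖ := by
        calc _ = ‖((ttm c)^[n] z - (ttm c)^[n] (qs (φ j)))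
            + ((ttm c)^[n] (qs (φ j)) - (ttm c)^[n] q)‖ := by ring_nf
          _ ≤ _ := norm_add_le _ _
    _ ≤ max (r (φ j) - 1) 0 + ‖qs (φ j) - q‖ :=
        add_le_add (htail (φ j) n hn) (ttm_iter_lipschitz c _ _ h1 n)
    _ < ε/2 + ε/2 := by
        apply add_lt_add hj1
        rwa [← Complex.dist_eq]
    _ = ε := by ring
end

section
/- If c is real and |c| > 1, then the filled-in Julia set K(c) is contained in the imaginary axis: every z ∈ K(c) satisfies Re(z) = 0. -/
lemma ttm_re (c : ℝ) (z : ℂ) : (ttm c z).re = c * z.re := by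
  unfold ttm
  split <;> simp [Complex.sub_re, Complex.conj_re, Complex.mul_re]

lemma ttm_iter_re (c : ℝ) (z : ℂ) (n : ℕ) :
    ((ttm c)^[n] z).re = c ^ n * z.re := by
  induction n with
  | zero => simp
  | succ n ih =>
    rw [Function.iterate_succ_apply', ttm_re, ih, pow_succ]
    ring

theorem ttmK_real_param_subset_imaginary_axis (c : ℝ) (h : 1 < |c|) :
    ∀ z ∈ ttmK (c : ℂ), z.re = 0 := by
  intro z hz
  by_contra hre
  obtain ⟨C, hC⟩ := isBounded_iff_forall_norm_le.1 (show Bornology.IsBounded (Set.range fun n : ℕ => (ttm c)^[n] z) from hz)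
  have hb : ∀ n : ℕ, |c| ^ n * |z.re| ≤ C := by
    intro n
    have := hC _ ⟨n, rfl⟩
    calc |c| ^ n * |z.re| = |((ttm c)^[n] z).re| := by
          rw [ttm_iter_re, abs_mul, abs_pow]
      _ ≤ ‖(ttm c)^[n] z‖ := Complex.abs_re_le_norm _
      _ ≤ C := this
  have hlim : Filter.Tendsto (fun n : ℕ => |c| ^ n * |z.re|) Filter.atTop Filter.atTop :=
    (tendsto_pow_atTop_atTop_of_one_lt h).atTop_mul_const (abs_pos.2 hre)
  obtain ⟨n, hn⟩ := (hlim.eventually_gt_atTop C).exists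
  exact absurd (hb n) (not_le.2 hn)
end

section
/- Let c be real, let G : ℝ → ℝ be the real tent map G(x) = c·x if x < 1/2 and G(x) = c - c·x if x ≥ 1/2, and let φ : ℂ → ℂ be defined by φ(z) = c·i·z/2. Then f_c restricted to the imaginary axis is conjugated to G by φ: for every x ∈ ℝ, φ(x·i) is the real number -c·x/2, and φ(f_c(x·i)) = G(-c·x/2) (the right-hand side viewed as a complex number). -/
theorem ttm_conjugate_to_real_tent_map (c : ℝ) (G : ℝ → ℝ)
    (hG : ∀ x : ℝ, G x = if x < 1/2 then c * x else c - c * x)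
    (φ : ℂ → ℂ) (hφ : ∀ z : ℂ, φ z = (c : ℂ) * Complex.I * z / 2) (x : ℝ) :
    φ ((x : ℂ) * Complex.I) = ((-c * x / 2 : ℝ) : ℂ) ∧
    φ (ttm (c : ℂ) ((x : ℂ) * Complex.I)) = ((G (-c * x / 2) : ℝ) : ℂ) := by
  have him : ((c : ℂ) * ((x : ℂ) * Complex.I)).im = c * x := by
    simp [Complex.mul_im]
  constructor
  · rw [hφ]
    push_cast
    linear_combination ((c:ℂ) * x / 2) * Complex.I_sq
  · rw [hφ, ttm, him, hG]
    by_cases h : -1 ≤ c * x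
    · rw [if_pos h]
      by_cases h2 : -c * x / 2 < 1/2
      · rw [if_pos h2]
        push_cast
        linear_combination ((c:ℂ)^2 * x / 2) * Complex.I_sq
      · rw [if_neg h2]
        have hcx : c * x = -1 := by push_neg at h2; linarith
        have hcxC : (c:ℂ) * (x:ℂ) = -1 := by exact_mod_cast hcx
        push_cast
        linear_combination ((c:ℂ)^2 * x / 2) * Complex.I_sq - (c:ℂ) * hcxC
    · rw [if_neg h, if_neg (by push_neg at h ⊢; linarith)]
      have hconj : (starRingEnd ℂ) ((c : ℂ) * ((x : ℂ) * Complex.I))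
          = -((c:ℂ) * x * Complex.I) := by
        simp [map_mul, Complex.conj_I]; ring
      rw [hconj]
      push_cast
      linear_combination ((-(c:ℂ)^2 * x - 2 * c) / 2) * Complex.I_sq
end

section
/- If c is real and |c| > 2, then the filled-in Julia set K(c) is a Cantor set: K(c) is nonempty, compact, totally disconnected, and perfect (has no isolated points). -/
namespace TTMCantor

open Set

/-- the real tent-type map governing imaginary parts -/
noncomputable def tg (c : ℝ) (y : ℝ) : ℝ := |c * y + 1| - 1

/-- escape radius -/
noncomputable def rr (c : ℝ) : ℝ := 2 / (|c| - 2)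

/-- bounded-orbit set on the imaginary axis -/
def lamS (c : ℝ) : Set ℝ := {y | ∀ n : ℕ, |(tg c)^[n] y| ≤ rr c}

variable {c : ℝ}

lemma rr_pos (h : 2 < |c|) : 0 < rr c := div_pos two_pos (by linarith)

lemma tg_cont : Continuous (tg c) :=
  (((continuous_const.mul continuous_id).add continuous_const).abs).sub continuous_const

lemma tg_zero : tg c 0 = 0 := by simp [tg]

lemma neg_one_le_tg (y : ℝ) : -1 ≤ tg c y := by
  simp only [tg]
  have := abs_nonneg (c * y + 1); linarith

lemma ttm_re (z : ℂ) : (ttm (c:ℂ) z).re = c * z.re := by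
  unfold ttm
  split_ifs <;> simp [Complex.mul_re]

lemma ttm_im (z : ℂ) : (ttm (c:ℂ) z).im = tg c z.im := by
  have hmul : ((c:ℂ) * z).im = c * z.im := by simp [Complex.mul_im]
  unfold ttm tg
  split_ifs with hle
  · rw [hmul] at hle ⊢
    have habs : |c * z.im + 1| = c * z.im + 1 := abs_of_nonneg (by linarith)
    rw [habs]; ring
  · push_neg at hle
    rw [hmul] at hle
    have h2 : ((starRingEnd ℂ) ((c:ℂ) * z) - 2 * Complex.I).im = -(c * z.im) - 2 := by
      simp [Complex.mul_im, hmul]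
    have habs : |c * z.im + 1| = -(c * z.im + 1) := abs_of_neg (by linarith)
    rw [h2, habs]; ring

lemma ttm_iter_re (n : ℕ) (z : ℂ) : ((ttm (c:ℂ))^[n] z).re = c ^ n * z.re := by
  induction n with
  | zero => simp
  | succ n ih => rw [Function.iterate_succ_apply', ttm_re, ih, pow_succ]; ring

lemma ttm_iter_im (n : ℕ) (z : ℂ) : ((ttm (c:ℂ))^[n] z).im = (tg c)^[n] z.im := by
  induction n with
  | zero => simp
  | succ n ih => rw [Function.iterate_succ_apply', ttm_im, ih, Function.iterate_succ_apply']

lemma tg_escape (h : 2 < |c|) {y : ℝ} (hy : rr c < |y|) : 2 * |y| ≤ |tg c y| := by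
  have hpos : (0:ℝ) < |c| - 2 := by linarith
  have h2 : 2 < |y| * (|c| - 2) := (div_lt_iff₀ hpos).mp hy
  have h1 : |c * y| - 1 ≤ |c * y + 1| := by
    have := abs_add_le (c * y + 1) (-1)
    simp at this
    have h3 : |c * y| = |c * y + 1 + -1| := by ring_nf
    rw [abs_mul] at *
    nlinarith [abs_add_le (c * y + 1) (-1), abs_nonneg (c*y+1)]
  have hkey : 2 * |y| ≤ tg c y := by
    unfold tg
    rw [abs_mul] at h1
    nlinarith [abs_nonneg y]
  exact hkey.trans (le_abs_self _)

lemma lamS_of_bounded (h : 2 < |c|) {y M : ℝ} (hM : ∀ n : ℕ, |(tg c)^[n] y| ≤ M) :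
    y ∈ lamS c := by
  intro n
  by_contra hn
  push_neg at hn
  have hgrow : ∀ k : ℕ, 2 ^ k * |(tg c)^[n] y| ≤ |(tg c)^[n + k] y| := by
    intro k
    induction k with
    | zero => simp
    | succ k ih =>
      have hbig : rr c < |(tg c)^[n + k] y| := by
        have h1 : |(tg c)^[n] y| ≤ 2 ^ k * |(tg c)^[n] y| := by
          have h2k : (1:ℝ) ≤ 2 ^ k := one_le_pow₀ one_le_two
          nlinarith [abs_nonneg ((tg c)^[n] y)]
        calc rr c < |(tg c)^[n] y| := hn
          _ ≤ _ := h1.trans ih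
      have := tg_escape h hbig
      calc 2 ^ (k+1) * |(tg c)^[n] y| = 2 * (2 ^ k * |(tg c)^[n] y|) := by ring
        _ ≤ 2 * |(tg c)^[n + k] y| := by linarith [abs_nonneg ((tg c)^[n+k] y)]
        _ ≤ |tg c ((tg c)^[n + k] y)| := this
        _ = |(tg c)^[n + (k+1)] y| := by
            have hnk : n + (k+1) = (n + k) + 1 := by omega
            rw [hnk, Function.iterate_succ_apply']
  obtain ⟨k, hk⟩ := pow_unbounded_of_one_lt (M / rr c) (y := (2:ℝ)) one_lt_two
  have hrr := rr_pos h
  have : M < 2 ^ k * rr c := by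
    rw [div_lt_iff₀ hrr] at hk; linarith
  have hle := hM (n + k)
  have hg := hgrow k
  nlinarith [abs_nonneg ((tg c)^[n] y), pow_pos (zero_lt_two : (0:ℝ) < 2) k]

lemma lamS_fwd {y : ℝ} (hy : y ∈ lamS c) : tg c y ∈ lamS c := by
  intro n
  have := hy (n + 1)
  rwa [Function.iterate_succ_apply] at this

lemma lamS_bwd (h : 2 < |c|) {y : ℝ} (hy : tg c y ∈ lamS c) : y ∈ lamS c := by
  apply lamS_of_bounded h (M := max |y| (rr c))
  intro n
  cases n with
  | zero => simpa using le_max_left _ _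
  | succ n =>
    rw [Function.iterate_succ_apply]
    exact (hy n).trans (le_max_right _ _)

lemma mem_ttmK_iff (h : 2 < |c|) {z : ℂ} :
    z ∈ ttmK (c:ℂ) ↔ z.re = 0 ∧ z.im ∈ lamS c := by
  constructor
  · intro hz
    have hz' : Bornology.IsBounded (Set.range fun n : ℕ => (ttm (c:ℂ))^[n] z) := hz
    obtain ⟨M, hM⟩ := isBounded_iff_forall_norm_le.mp hz'
    have hM' : ∀ n : ℕ, ‖(ttm (c:ℂ))^[n] z‖ ≤ M := fun n => hM _ (Set.mem_range_self n)
    have hre : z.re = 0 := by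
      by_contra hre
      have habs : 0 < |z.re| := abs_pos.mpr hre
      obtain ⟨n, hn⟩ := pow_unbounded_of_one_lt (M / |z.re|) (y := |c|) (by linarith)
      have h1 : |c| ^ n * |z.re| ≤ M := by
        have hnrm := hM' n
        have := (Complex.abs_re_le_norm ((ttm (c:ℂ))^[n] z)).trans hnrm
        rwa [ttm_iter_re, abs_mul, abs_pow] at this
      rw [div_lt_iff₀ habs] at hn
      nlinarith
    refine ⟨hre, lamS_of_bounded h (M := M) fun n => ?_⟩
    have hnrm := hM' n
    have := (Complex.abs_im_le_norm ((ttm (c:ℂ))^[n] z)).trans hnrm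
    rwa [ttm_iter_im] at this
  · rintro ⟨hre, him⟩
    show Bornology.IsBounded (Set.range fun n : ℕ => (ttm (c:ℂ))^[n] z)
    apply isBounded_iff_forall_norm_le.mpr
    refine ⟨rr c, ?_⟩
    rintro x ⟨n, rfl⟩
    simp only
    calc ‖(ttm (c:ℂ))^[n] z‖ ≤ |((ttm (c:ℂ))^[n] z).re| + |((ttm (c:ℂ))^[n] z).im| :=
        Complex.norm_le_abs_re_add_abs_im _
      _ = |(tg c)^[n] z.im| := by rw [ttm_iter_re, ttm_iter_im, hre]; simp
      _ ≤ rr c := him n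

lemma ttmK_eq (h : 2 < |c|) :
    ttmK (c:ℂ) = {z : ℂ | z.re = 0} ∩ ⋂ n : ℕ, {z : ℂ | |(tg c)^[n] z.im| ≤ rr c} := by
  ext z
  simp only [Set.mem_inter_iff, Set.mem_iInter, Set.mem_setOf_eq, mem_ttmK_iff h]
  exact Iff.rfl

lemma ttmK_closed (h : 2 < |c|) : IsClosed (ttmK (c:ℂ)) := by
  rw [ttmK_eq h]
  apply IsClosed.inter
  · exact isClosed_eq Complex.continuous_re continuous_const
  · apply isClosed_iInter
    intro n
    exact isClosed_le ((tg_cont.iterate n).comp Complex.continuous_im).abs continuous_const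

lemma ttmK_compact (h : 2 < |c|) : IsCompact (ttmK (c:ℂ)) := by
  apply Metric.isCompact_of_isClosed_isBounded (ttmK_closed h)
  apply isBounded_iff_forall_norm_le.mpr
  refine ⟨rr c, fun z hz => ?_⟩
  obtain ⟨hre, him⟩ := (mem_ttmK_iff h).mp hz
  have := him 0
  simp only [Function.iterate_zero, id_eq] at this
  calc ‖z‖ ≤ |z.re| + |z.im| := Complex.norm_le_abs_re_add_abs_im z
    _ ≤ rr c := by rw [hre]; simpa using this

lemma zero_mem_lamS (h : 2 < |c|) : (0:ℝ) ∈ lamS c := by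
  intro n
  rw [Function.iterate_fixed tg_zero]
  simpa using (rr_pos h).le

lemma ttmK_nonempty (h : 2 < |c|) : (ttmK (c:ℂ)).Nonempty :=
  ⟨0, (mem_ttmK_iff h).mpr ⟨by simp, by simpa using zero_mem_lamS h⟩⟩


lemma tg_affine_on (h : 2 < |c|) {u v : ℝ} (huv : u ≤ v) :
    ∃ p q : ℝ, u ≤ p ∧ p ≤ q ∧ q ≤ v ∧ q - p = (v - u)/2 ∧
      ((∀ y ∈ Icc p q, 0 ≤ c * y + 1) ∨ (∀ y ∈ Icc p q, c * y + 1 ≤ 0)) := by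
  have hc0 : c ≠ 0 := by
    intro h0; rw [h0] at h; simp at h; linarith
  set t := (u + v)/2 with ht
  by_cases hk : -1/c ≤ t
  · refine ⟨t, v, by simp only [ht]; linarith, by simp only [ht]; linarith, le_refl v, by ring, ?_⟩
    rcases lt_or_gt_of_ne hc0 with hcneg | hcpos
    · right; intro y hy
      have hy1 : -1/c ≤ y := hk.trans hy.1
      have := (div_le_iff_of_neg hcneg).mp hy1
      linarith
    · left; intro y hy
      have hy1 : -1/c ≤ y := hk.trans hy.1
      have := (div_le_iff₀ hcpos).mp hy1
      linarith
  · push_neg at hk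
    refine ⟨u, t, le_refl u, by simp only [ht]; linarith, by simp only [ht]; linarith, by ring, ?_⟩
    rcases lt_or_gt_of_ne hc0 with hcneg | hcpos
    · left; intro y hy
      have hy1 : y ≤ -1/c := hy.2.trans hk.le
      have := (le_div_iff_of_neg hcneg).mp hy1
      linarith
    · right; intro y hy
      have hy1 : y ≤ -1/c := hy.2.trans hk.le
      have := (le_div_iff₀ hcpos).mp hy1
      linarith

lemma grow (h : 2 < |c|) {u v : ℝ} (huv : u ≤ v) (hsub : Set.Icc u v ⊆ lamS c) :
    ∃ u' v' : ℝ, u' ≤ v' ∧ |c|/2 * (v - u) ≤ v' - u' ∧ Set.Icc u' v' ⊆ lamS c := by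
  obtain ⟨p, q, hup, hpq, hqv, hlen, hsign⟩ := tg_affine_on h huv
  have hIcc : Set.Icc p q ⊆ Set.Icc u v := Set.Icc_subset_Icc hup hqv
  have hcont : ContinuousOn (tg c) (Set.uIcc p q) := tg_cont.continuousOn
  have himg : Set.uIcc (tg c p) (tg c q) ⊆ tg c '' Set.uIcc p q := intermediate_value_uIcc hcont
  rw [Set.uIcc_of_le hpq] at himg
  refine ⟨(tg c p) ⊓ (tg c q), (tg c p) ⊔ (tg c q), inf_le_sup, ?_, ?_⟩
  · have hms : (tg c p) ⊔ (tg c q) - (tg c p) ⊓ (tg c q) = |tg c q - tg c p| :=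
      max_sub_min_eq_abs _ _
    have hdiff : |tg c q - tg c p| = |c| * (q - p) := by
      rcases hsign with hs | hs
      · have hp := hs p (Set.left_mem_Icc.mpr hpq)
        have hq := hs q (Set.right_mem_Icc.mpr hpq)
        simp only [tg]
        rw [abs_of_nonneg hp, abs_of_nonneg hq,
          show c*q+1-1-(c*p+1-1) = c*(q-p) by ring, abs_mul, abs_of_nonneg (show (0:ℝ) ≤ q - p by linarith)]
      · have hp := hs p (Set.left_mem_Icc.mpr hpq)
        have hq := hs q (Set.right_mem_Icc.mpr hpq)
        simp only [tg]
        rw [abs_of_nonpos hp, abs_of_nonpos hq,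
          show -(c*q+1)-1-(-(c*p+1)-1) = -(c*(q-p)) by ring, abs_neg, abs_mul,
          abs_of_nonneg (show (0:ℝ) ≤ q - p by linarith)]
    rw [hms, hdiff, hlen]
    exact le_of_eq (by ring)
  · intro w hw
    have hw' : w ∈ Set.uIcc (tg c p) (tg c q) := hw
    obtain ⟨y, hy, rfl⟩ := himg hw'
    exact lamS_fwd (hsub (hIcc hy))

lemma grow_n (h : 2 < |c|) {u v : ℝ} (huv : u ≤ v) (hsub : Set.Icc u v ⊆ lamS c) (n : ℕ) :
    ∃ u' v' : ℝ, u' ≤ v' ∧ (|c|/2)^n * (v - u) ≤ v' - u' ∧ Set.Icc u' v' ⊆ lamS c := by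
  induction n with
  | zero => exact ⟨u, v, huv, by simp, hsub⟩
  | succ n ih =>
    obtain ⟨u', v', huv', hlen', hsub'⟩ := ih
    obtain ⟨u'', v'', huv'', hlen'', hsub''⟩ := grow h huv' hsub'
    refine ⟨u'', v'', huv'', ?_, hsub''⟩
    have hc2 : (0:ℝ) < |c|/2 := by linarith
    calc (|c|/2)^(n+1) * (v - u) = (|c|/2) * ((|c|/2)^n * (v - u)) := by ring
      _ ≤ (|c|/2) * (v' - u') := by nlinarith
      _ ≤ v'' - u'' := hlen''

lemma no_interval (h : 2 < |c|) {u v : ℝ} (huv : u < v) : ¬ (Set.Icc u v ⊆ lamS c) := by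
  intro hsub
  obtain ⟨n, hn⟩ := pow_unbounded_of_one_lt (2 * rr c / (v - u)) (y := |c|/2) (by linarith)
  obtain ⟨u', v', huv', hlen, hsub'⟩ := grow_n h huv.le hsub n
  have hu' := (hsub' (Set.left_mem_Icc.mpr huv')) 0
  have hv' := (hsub' (Set.right_mem_Icc.mpr huv')) 0
  simp only [Function.iterate_zero, id_eq] at hu' hv'
  have h1 : v' - u' ≤ 2 * rr c := by
    have := abs_le.mp hu'
    have := abs_le.mp hv'
    linarith [(abs_le.mp hu').1, (abs_le.mp hv').2]
  rw [div_lt_iff₀ (by linarith : (0:ℝ) < v - u)] at hn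
  nlinarith

theorem ttmK_totallyDisconnected (h : 2 < |c|) : IsTotallyDisconnected (ttmK (c:ℂ)) := by
  intro t hts hpc z1 h1 z2 h2
  by_contra hne
  have hm1 := (mem_ttmK_iff h).mp (hts h1)
  have hm2 := (mem_ttmK_iff h).mp (hts h2)
  have him : z1.im ≠ z2.im := by
    intro he
    exact hne (Complex.ext (by rw [hm1.1, hm2.1]) he)
  have hpre : IsPreconnected (Complex.im '' t) := hpc.image _ Complex.continuous_im.continuousOn
  have hord := hpre.ordConnected
  have hsub : Set.uIcc z1.im z2.im ⊆ Complex.im '' t :=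
    hord.uIcc_subset ⟨z1, h1, rfl⟩ ⟨z2, h2, rfl⟩
  have hsub2 : Set.Icc (z1.im ⊓ z2.im) (z1.im ⊔ z2.im) ⊆ lamS c := by
    intro w hw
    obtain ⟨z, hz, rfl⟩ := hsub hw
    exact ((mem_ttmK_iff h).mp (hts hz)).2
  exact no_interval h (min_lt_max.mpr him) hsub2


/-! ### Perfectness -/

noncomputable def mJ (c : ℝ) : ℝ := if 0 < c then c - 2 else -2/(c+1)

lemma hc_cases (h : 2 < |c|) : 2 < c ∨ c < -2 := by
  rcases abs_cases c with ⟨he, _⟩ | ⟨he, _⟩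
  · left; linarith
  · right; linarith

lemma c_ne_zero (h : 2 < |c|) : c ≠ 0 := by
  rcases hc_cases h with hc | hc <;> intro h0 <;> rw [h0] at hc <;> linarith

lemma mJ_pos_eq (hc : 2 < c) : mJ c = c - 2 := if_pos (by linarith)

lemma mJ_neg_eq (hc : c < -2) : mJ c = -2/(c+1) := if_neg (by linarith)

lemma JD0 (h : 2 < |c|) {u : ℝ} (hu : u ∈ Icc (-1:ℝ) (mJ c)) :
    u / c ∈ Icc (-1:ℝ) (mJ c) := by
  obtain ⟨hu1, hu2⟩ := hu
  rcases hc_cases h with hc | hc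
  · rw [mJ_pos_eq hc] at hu2 ⊢
    have hc0 : (0:ℝ) < c := by linarith
    constructor
    · rw [le_div_iff₀ hc0]; nlinarith
    · rw [div_le_iff₀ hc0]; nlinarith
  · rw [mJ_neg_eq hc] at hu2 ⊢
    have hc0 : c < 0 := by linarith
    have hc1 : c + 1 < 0 := by linarith
    have hu2' : -2 ≤ u * (c+1) := (le_div_iff_of_neg hc1).mp hu2
    constructor
    · rw [le_div_iff_of_neg hc0]
      nlinarith
    · rw [div_le_iff_of_neg hc0]
      have hne : c + 1 ≠ 0 := ne_of_lt hc1
      have hqc : -2/(c+1) * c = -2 - (-2/(c+1)) := by field_simp; ring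
      have hm : 0 < -2/(c+1) := by rw [div_pos_iff]; right; constructor <;> linarith
      rw [hqc]; linarith

lemma JD1 (h : 2 < |c|) {u : ℝ} (hu : u ∈ Icc (-1:ℝ) (mJ c)) :
    (-u - 2) / c ∈ Icc (-1:ℝ) (mJ c) := by
  obtain ⟨hu1, hu2⟩ := hu
  rcases hc_cases h with hc | hc
  · rw [mJ_pos_eq hc] at hu2 ⊢
    have hc0 : (0:ℝ) < c := by linarith
    constructor
    · rw [le_div_iff₀ hc0]; nlinarith
    · rw [div_le_iff₀ hc0]; nlinarith
  · rw [mJ_neg_eq hc] at hu2 ⊢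
    have hc0 : c < 0 := by linarith
    have hc1 : c + 1 < 0 := by linarith
    have hu2' : -2 ≤ u * (c+1) := (le_div_iff_of_neg hc1).mp hu2
    constructor
    · rw [le_div_iff_of_neg hc0]; nlinarith
    · rw [div_le_iff_of_neg hc0]
      have hne : c + 1 ≠ 0 := ne_of_lt hc1
      have hqc : -2/(c+1) * c = -2 - (-2/(c+1)) := by field_simp; ring
      rw [hqc]; linarith

lemma zero_mem_J (h : 2 < |c|) : (0:ℝ) ∈ Icc (-1:ℝ) (mJ c) := by
  rcases hc_cases h with hc | hc
  · rw [mJ_pos_eq hc]; constructor <;> [norm_num; linarith]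
  · rw [mJ_neg_eq hc]
    have : 0 < -2/(c+1) := by
      rw [div_pos_iff]; right; constructor <;> linarith
    constructor <;> linarith

lemma q_mem_J (h : 2 < |c|) : -2/(c+1) ∈ Icc (-1:ℝ) (mJ c) := by
  rcases hc_cases h with hc | hc
  · rw [mJ_pos_eq hc]
    have hc1 : (0:ℝ) < c + 1 := by linarith
    constructor
    · rw [le_div_iff₀ hc1]; linarith
    · have : -2/(c+1) < 0 := by
        rw [div_neg_iff]; right; constructor <;> linarith
      linarith
  · rw [mJ_neg_eq hc]
    have : 0 < -2/(c+1) := by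
      rw [div_pos_iff]; right; constructor <;> linarith
    constructor <;> linarith

lemma q_fixed (h : 2 < |c|) : tg c (-2/(c+1)) = -2/(c+1) := by
  have hc1 : c + 1 ≠ 0 := by
    rcases hc_cases h with hc | hc <;> intro h0 <;> nlinarith
  have hkey : c * (-2/(c+1)) + 1 = (1 - c)/(c+1) := by field_simp; ring
  have hnp : c * (-2/(c+1)) + 1 ≤ 0 := by
    rw [hkey]
    rcases hc_cases h with hc | hc
    · apply div_nonpos_of_nonpos_of_nonneg <;> linarith
    · apply div_nonpos_of_nonneg_of_nonpos <;> linarith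
  rw [tg, abs_of_nonpos hnp]
  field_simp
  ring

lemma q_mem_lamS (h : 2 < |c|) : -2/(c+1) ∈ lamS c := by
  intro n
  rw [Function.iterate_fixed (q_fixed h)]
  have h1 : |c| ≤ |c+1| + 1 := by
    calc |c| = |c + 1 + (-1)| := by ring_nf
      _ ≤ |c+1| + |(-1:ℝ)| := abs_add_le _ _
      _ = |c+1| + 1 := by norm_num
  have h2 : (0:ℝ) < |c| - 2 := by linarith
  have h3 : (0:ℝ) < |c+1| := by linarith
  have habs : |(-2)/(c+1)| = 2/|c+1| := by
    rw [abs_div]; norm_num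
  rw [habs, rr, div_le_div_iff₀ h3 h2]
  linarith

lemma q_ne_zero (h : 2 < |c|) : -2/(c+1) ≠ (0:ℝ) := by
  apply div_ne_zero (by norm_num)
  rcases hc_cases h with hc | hc <;> intro h0 <;> nlinarith

lemma approx (h : 2 < |c|) (n : ℕ) :
    ∀ y ∈ lamS c, ∀ w ∈ Icc (-1:ℝ) (mJ c), w ∈ lamS c →
      ∃ y', y' ∈ lamS c ∧ y' ∈ Icc (-1:ℝ) (mJ c) ∧
        |y' - y| * |c| ^ n = |w - (tg c)^[n] y| := by
  induction n with
  | zero =>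
    intro y _ w hwJ hwS
    exact ⟨w, hwS, hwJ, by simp⟩
  | succ n ih =>
    intro y hy w hwJ hwS
    obtain ⟨u, huS, huJ, hue⟩ := ih (tg c y) (lamS_fwd hy) w hwJ hwS
    have hc0 : c ≠ 0 := c_ne_zero h
    have habsc : (0:ℝ) < |c| := abs_pos.mpr hc0
    set e : ℝ := if 0 ≤ c * y + 1 then 1 else -1 with he
    have habs_e : |e| = 1 := by
      rw [he]; split_ifs <;> simp
    have hcy : c * y + 1 = e * (tg c y + 1) := by
      rw [he]; simp only [tg]
      split_ifs with h0
      · rw [abs_of_nonneg h0]; ring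
      · rw [abs_of_neg (lt_of_not_ge h0)]; ring
    set y' : ℝ := (e * (u + 1) - 1)/c with hy'
    have hcy' : c * y' + 1 = e * (u + 1) := by
      rw [hy']; field_simp; ring
    have hty' : tg c y' = u := by
      rw [tg, hcy', abs_mul, habs_e, one_mul,
        abs_of_nonneg (show (0:ℝ) ≤ u + 1 by have := huJ.1; linarith)]
      ring
    have hJ : y' ∈ Icc (-1:ℝ) (mJ c) := by
      rw [he] at hy'
      split_ifs at hy' with h0
      · have : y' = u / c := by rw [hy']; ring
        rw [this]; exact JD0 h huJ
      · have : y' = (-u - 2) / c := by rw [hy']; ring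
        rw [this]; exact JD1 h huJ
    have hS : y' ∈ lamS c := lamS_bwd h (by rw [hty']; exact huS)
    refine ⟨y', hS, hJ, ?_⟩
    have h1 : y' - y = ((c * y' + 1) - (c * y + 1))/c := by
      field_simp; ring
    have h2 : y' - y = e * (u - tg c y) / c := by
      rw [h1, hcy', hcy]; ring_nf
    have h3 : |y' - y| = |u - tg c y| / |c| := by
      rw [h2, abs_div, abs_mul, habs_e, one_mul]
    calc |y' - y| * |c| ^ (n + 1)
        = (|u - tg c y| / |c|) * (|c| ^ n * |c|) := by rw [h3, pow_succ]
      _ = |u - tg c y| * |c| ^ n := by field_simp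
      _ = |w - (tg c)^[n] (tg c y)| := hue
      _ = |w - (tg c)^[n + 1] y| := by rw [Function.iterate_succ_apply]

theorem ttmK_perfect (h : 2 < |c|) : Perfect (ttmK (c:ℂ)) := by
  constructor
  · exact ttmK_closed h
  · intro z hz
    rw [accPt_iff_nhds]
    intro U hU
    obtain ⟨ε, hε, hball⟩ := Metric.mem_nhds_iff.mp hU
    obtain ⟨hre, him⟩ := (mem_ttmK_iff h).mp hz
    obtain ⟨n, hn⟩ := pow_unbounded_of_one_lt ((2 + rr c) / ε) (y := (2:ℝ)) one_lt_two
    set t := (tg c)^[n] z.im with hts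
    have hwex : ∃ w : ℝ, w ∈ Icc (-1:ℝ) (mJ c) ∧ w ∈ lamS c ∧ w ≠ t ∧ |w| ≤ 2 := by
      by_cases h0 : t = 0
      · refine ⟨-2/(c+1), q_mem_J h, q_mem_lamS h, by rw [h0]; exact q_ne_zero h, ?_⟩
        have h1 : |c| ≤ |c+1| + 1 := by
          calc |c| = |c + 1 + (-1)| := by ring_nf
            _ ≤ |c+1| + |(-1:ℝ)| := abs_add_le _ _
            _ = |c+1| + 1 := by norm_num
        have h3 : (0:ℝ) < |c+1| := by linarith
        have habs : |(-2)/(c+1)| = 2/|c+1| := by rw [abs_div]; norm_num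
        rw [habs, div_le_iff₀ h3]; nlinarith
      · exact ⟨0, zero_mem_J h, zero_mem_lamS h, fun h1 => h0 h1.symm, by norm_num⟩
    obtain ⟨w, hwJ, hwS, hwt, hw2⟩ := hwex
    obtain ⟨y', hy'S, _, hy'e⟩ := approx h n z.im him w hwJ hwS
    have h2n : (0:ℝ) < 2 ^ n := pow_pos zero_lt_two n
    have hcn : (2:ℝ) ^ n ≤ |c| ^ n := pow_le_pow_left₀ (by norm_num) (by linarith) n
    have hne0 : |y' - z.im| ≠ 0 := by
      intro h0
      rw [h0, zero_mul] at hy'e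
      exact hwt (by have := abs_eq_zero.mp hy'e.symm; linarith)
    have hy'ne : y' ≠ z.im := fun h0 => hne0 (by rw [h0, sub_self, abs_zero])
    have hsmall : |y' - z.im| < ε := by
      have hb1 : |w - t| ≤ 2 + rr c := by
        calc |w - t| ≤ |w| + |t| := abs_sub _ _
          _ ≤ 2 + rr c := add_le_add hw2 (him n)
      have hb2 : |y' - z.im| * 2 ^ n ≤ 2 + rr c := by
        calc |y' - z.im| * 2 ^ n ≤ |y' - z.im| * |c| ^ n :=
            mul_le_mul_of_nonneg_left hcn (abs_nonneg _)
          _ = |w - t| := hy'e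
          _ ≤ 2 + rr c := hb1
      rw [div_lt_iff₀ hε] at hn
      nlinarith [abs_nonneg (y' - z.im)]
    set z' : ℂ := (y' : ℂ) * Complex.I with hz'
    have hz're : z'.re = 0 := by simp [hz']
    have hz'im : z'.im = y' := by simp [hz']
    have hz'K : z' ∈ ttmK (c:ℂ) := (mem_ttmK_iff h).mpr ⟨hz're, by rw [hz'im]; exact hy'S⟩
    have hz'ne : z' ≠ z := by
      intro h0
      exact hy'ne (by rw [← hz'im, h0])
    have hdist : dist z' z < ε := by
      rw [Complex.dist_eq]
      calc ‖z' - z‖ ≤ |(z' - z).re| + |(z' - z).im| :=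
          Complex.norm_le_abs_re_add_abs_im _
        _ = |y' - z.im| := by
            rw [Complex.sub_re, Complex.sub_im, hz're, hz'im, hre]; simp
        _ < ε := hsmall
    exact ⟨z', ⟨hball (Metric.mem_ball.mpr hdist), hz'K⟩, hz'ne⟩

end TTMCantor

theorem ttmK_real_param_cantor (c : ℝ) (h : 2 < |c|) :
    (ttmK (c : ℂ)).Nonempty ∧ IsCompact (ttmK (c : ℂ)) ∧
    IsTotallyDisconnected (ttmK (c : ℂ)) ∧ Perfect (ttmK (c : ℂ)) := by
  exact ⟨TTMCantor.ttmK_nonempty h, TTMCantor.ttmK_compact h, TTMCantor.ttmK_totallyDisconnected h,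
    TTMCantor.ttmK_perfect h⟩
end

section
/- Suppose |c| > 1 and every point z ∈ K(c) satisfies Im(z) > -1 (i.e. K(c) is disjoint from the closed lower half-plane {Im(z) ≤ -1}). Then K(c) is totally disconnected and uncountable; in particular it has uncountably many connected components. -/
open Complex Set Metric Bornology Function Filter

namespace TTMaux

lemma continuous_ttm (c : ℂ) : Continuous (ttm c) := by
  unfold ttm
  apply Continuous.if_le (continuous_const.mul continuous_id)
    ((Complex.continuous_conj.comp (continuous_const.mul continuous_id)).sub continuous_const)
    continuous_const (Complex.continuous_im.comp (continuous_const.mul continuous_id))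
  intro x hx
  apply Complex.ext <;> simp [Complex.ext_iff] <;> simp at hx <;> linarith [hx]

lemma ttm_abs_ge (c z : ℂ) : ‖c‖ * ‖z‖ - 2 ≤ ‖ttm c z‖ := by
  unfold ttm
  split_ifs with hb
  · rw [norm_mul]; linarith [norm_nonneg (c * z)]
  · have h1 : ‖(starRingEnd ℂ) (c * z)‖ - ‖(2 * Complex.I : ℂ)‖
        ≤ ‖(starRingEnd ℂ) (c * z) - 2 * Complex.I‖ := norm_sub_norm_le _ _
    simpa [norm_mul] using h1

/-- forward invariance -/
lemma mem_ttmK_iff {c z : ℂ} :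
    z ∈ ttmK c ↔ IsBounded (Set.range fun n : ℕ => (ttm c)^[n] z) := Iff.rfl

lemma ttm_mem_K {c z : ℂ} (hz : z ∈ ttmK c) : ttm c z ∈ ttmK c := by
  rw [mem_ttmK_iff] at hz ⊢
  refine hz.subset ?_
  rintro w ⟨n, rfl⟩
  exact ⟨n + 1, (Function.iterate_succ_apply (ttm c) n z).symm⟩

lemma iterate_mem_K {c z : ℂ} (hz : z ∈ ttmK c) (n : ℕ) : (ttm c)^[n] z ∈ ttmK c := by
  induction n with
  | zero => exact hz
  | succ k ih => rw [Function.iterate_succ_apply']; exact ttm_mem_K ih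

/-- backward invariance -/
lemma mem_K_of_ttm {c z : ℂ} (hz : ttm c z ∈ ttmK c) : z ∈ ttmK c := by
  have : (Set.range fun n : ℕ => (ttm c)^[n] z) ⊆
      {z} ∪ Set.range fun n : ℕ => (ttm c)^[n] (ttm c z) := by
    rintro w ⟨n, rfl⟩
    cases n with
    | zero => exact Or.inl rfl
    | succ k => exact Or.inr ⟨k, (Function.iterate_succ_apply (ttm c) k z).symm⟩
  rw [mem_ttmK_iff] at hz ⊢
  exact ((isBounded_singleton.union hz)).subset this

/-- the radius bound -/
noncomputable def R (c : ℂ) : ℝ := 2 / (‖c‖ - 1)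

lemma R_pos {c : ℂ} (h : 1 < ‖c‖) : 0 < R c := by
  have : 0 < ‖c‖ - 1 := by linarith
  exact div_pos (by norm_num) this

lemma abs_le_R {c : ℂ} (h : 1 < ‖c‖) {z : ℂ} (hz : z ∈ ttmK c) :
    ‖z‖ ≤ R c := by
  by_contra hgt
  push_neg at hgt
  have hR : ‖c‖ * R c - 2 = R c := by
    have h1 : ‖c‖ - 1 ≠ 0 := by intro h0; rw [sub_eq_zero] at h0; linarith
    rw [R]
    field_simp
    ring
  have key : ∀ n : ℕ, R c + (‖c‖)^n * (‖z‖ - R c)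
      ≤ ‖(ttm c)^[n] z‖ := by
    intro n
    induction n with
    | zero => simp
    | succ k ih =>
      rw [Function.iterate_succ_apply']
      have h2 := ttm_abs_ge c ((ttm c)^[k] z)
      have h3 : ‖c‖ * (R c + (‖c‖)^k * (‖z‖ - R c))
          ≤ ‖c‖ * ‖(ttm c)^[k] z‖ :=
        mul_le_mul_of_nonneg_left ih (by positivity)
      calc R c + (‖c‖)^(k+1) * (‖z‖ - R c)
          = ‖c‖ * (R c + (‖c‖)^k * (‖z‖ - R c)) - 2 := by
            linear_combination (-1 : ℝ) * hR
        _ ≤ ‖c‖ * ‖(ttm c)^[k] z‖ - 2 := by linarith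
        _ ≤ _ := h2
  obtain ⟨M, hM⟩ := (Metric.isBounded_iff_subset_closedBall 0).mp (mem_ttmK_iff.mp hz)
  have hM' : ∀ n : ℕ, ‖(ttm c)^[n] z‖ ≤ M := by
    intro n
    have := hM ⟨n, rfl⟩
    simpa [Complex.dist_eq] using this
  obtain ⟨n, hn⟩ := pow_unbounded_of_one_lt ((M - R c) / (‖z‖ - R c)) h
  have hpos : 0 < ‖z‖ - R c := by linarith
  have : M - R c < (‖c‖)^n * (‖z‖ - R c) := by
    rw [div_lt_iff₀ hpos] at hn; linarith
  have := key n
  have := hM' n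
  linarith

lemma K_subset_ball {c : ℂ} (h : 1 < ‖c‖) :
    ttmK c ⊆ Metric.closedBall 0 (R c) := by
  intro z hz
  simpa [Complex.dist_eq] using abs_le_R h hz

lemma K_eq_iInter {c : ℂ} (h : 1 < ‖c‖) :
    ttmK c = ⋂ n : ℕ, (fun z => (ttm c)^[n] z) ⁻¹' Metric.closedBall 0 (R c) := by
  ext z
  simp only [Set.mem_iInter, Set.mem_preimage]
  constructor
  · intro hz n
    exact K_subset_ball h (iterate_mem_K hz n)
  · intro hz
    refine ((isBounded_closedBall (x := (0:ℂ)) (r := R c))).subset ?_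
    rintro w ⟨n, rfl⟩
    exact hz n

lemma K_closed {c : ℂ} (h : 1 < ‖c‖) : IsClosed (ttmK c) := by
  rw [K_eq_iInter h]
  exact isClosed_iInter fun n =>
    (Metric.isClosed_closedBall).preimage ((continuous_ttm c).iterate n)

lemma zero_mem_K (c : ℂ) : (0 : ℂ) ∈ ttmK c := by
  have h0 : ttm c 0 = 0 := by simp [ttm]
  have : ∀ n : ℕ, (ttm c)^[n] (0:ℂ) = 0 := by
    intro n; induction n with
    | zero => rfl
    | succ k ih => rw [Function.iterate_succ_apply', ih, h0]
  have : (Set.range fun n : ℕ => (ttm c)^[n] (0:ℂ)) = {0} := by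
    ext w; simp [this]
  rw [mem_ttmK_iff, this]
  exact isBounded_singleton

/-- Fold-line avoidance -/
lemma im_ne {c : ℂ} (h2 : ∀ z ∈ ttmK c, -1 < z.im) {z : ℂ} (hz : z ∈ ttmK c) :
    (c * z).im ≠ -1 := by
  intro heq
  have hf : ttm c z = c * z := by simp [ttm, heq]
  have := h2 _ (hf ▸ ttm_mem_K hz)
  rw [heq] at this
  exact lt_irrefl _ this

/-- inverse branches -/
noncomputable def g0 (c w : ℂ) : ℂ := w / c
noncomputable def g1 (c w : ℂ) : ℂ := ((starRingEnd ℂ) w - 2 * Complex.I) / c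

lemma cne {c : ℂ} (h : 1 < ‖c‖) : c ≠ 0 := by
  intro hc; rw [hc] at h; simp at h; linarith

lemma ttm_g0 {c : ℂ} (h : 1 < ‖c‖) {w : ℂ} (hw : -1 < w.im) :
    ttm c (g0 c w) = w := by
  have : c * g0 c w = w := by simp only [g0]; field_simp [cne h]
  rw [ttm, this, if_pos (le_of_lt hw)]

lemma ttm_g1 {c : ℂ} (h : 1 < ‖c‖) {w : ℂ} (hw : -1 < w.im) :
    ttm c (g1 c w) = w := by
  have hcg : c * g1 c w = (starRingEnd ℂ) w - 2 * Complex.I := by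
    simp only [g1]; field_simp [cne h]
  have him : (c * g1 c w).im < -1 := by
    rw [hcg]; simp; linarith
  rw [ttm, hcg, if_neg (by rw [← hcg]; exact not_le.mpr him)]
  simp [Complex.ext_iff]

lemma g0_mem_K {c : ℂ} (h : 1 < ‖c‖) (h2 : ∀ z ∈ ttmK c, -1 < z.im)
    {w : ℂ} (hw : w ∈ ttmK c) : g0 c w ∈ ttmK c :=
  mem_K_of_ttm (by rw [ttm_g0 h (h2 _ hw)]; exact hw)

lemma g1_mem_K {c : ℂ} (h : 1 < ‖c‖) (h2 : ∀ z ∈ ttmK c, -1 < z.im)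
    {w : ℂ} (hw : w ∈ ttmK c) : g1 c w ∈ ttmK c :=
  mem_K_of_ttm (by rw [ttm_g1 h (h2 _ hw)]; exact hw)

end TTMaux

namespace TTMaux

lemma g0_dist (c : ℂ) (w w' : ℂ) :
    ‖g0 c w - g0 c w'‖ = ‖w - w'‖ / ‖c‖ := by
  rw [g0, g0, div_sub_div_same, norm_div]

lemma g1_dist (c : ℂ) (w w' : ℂ) :
    ‖g1 c w - g1 c w'‖ = ‖w - w'‖ / ‖c‖ := by
  rw [g1, g1, div_sub_div_same]
  have : (starRingEnd ℂ) w - 2 * Complex.I - ((starRingEnd ℂ) w' - 2 * Complex.I)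
      = (starRingEnd ℂ) (w - w') := by rw [map_sub]; ring
  rw [this, norm_div, Complex.norm_conj]

lemma branch {c : ℂ} (h : 1 < ‖c‖) (h2 : ∀ z ∈ ttmK c, -1 < z.im)
    {z : ℂ} (hz : z ∈ ttmK c) : g0 c (ttm c z) = z ∨ g1 c (ttm c z) = z := by
  rcases lt_or_gt_of_ne (im_ne h2 hz) with hlt | hgt
  · right
    have hf : ttm c z = (starRingEnd ℂ) (c * z) - 2 * Complex.I := by
      rw [ttm, if_neg (not_le.mpr hlt)]
    rw [hf, g1]
    have : (starRingEnd ℂ) ((starRingEnd ℂ) (c * z) - 2 * Complex.I) - 2 * Complex.I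
        = c * z := by
      rw [map_sub, Complex.conj_conj]
      simp [Complex.ext_iff]
    rw [this]
    exact mul_div_cancel_left₀ z (cne h)
  · left
    have hf : ttm c z = c * z := by rw [ttm, if_pos (le_of_lt hgt)]
    rw [hf, g0]
    exact mul_div_cancel_left₀ z (cne h)

lemma pullback {c : ℂ} (h : 1 < ‖c‖) (h2 : ∀ z ∈ ttmK c, -1 < z.im) :
    ∀ n : ℕ, ∀ z ∈ ttmK c, ∀ p ∈ ttmK c, ∃ z' ∈ ttmK c, (ttm c)^[n] z' = p ∧
      ‖z' - z‖ = ‖p - (ttm c)^[n] z‖ / (‖c‖) ^ n := by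
  intro n
  induction n with
  | zero => intro z hz p hp; exact ⟨p, hp, rfl, by simp⟩
  | succ k ih =>
    intro z hz p hp
    obtain ⟨w', hw'K, hw'it, hw'd⟩ := ih (ttm c z) (ttm_mem_K hz) p hp
    rcases branch h h2 hz with hb | hb
    · refine ⟨g0 c w', g0_mem_K h h2 hw'K, ?_, ?_⟩
      · rw [Function.iterate_succ_apply, ttm_g0 h (h2 _ hw'K), hw'it]
      · calc ‖g0 c w' - z‖ = ‖g0 c w' - g0 c (ttm c z)‖ := by rw [hb]
          _ = ‖w' - ttm c z‖ / ‖c‖ := g0_dist c _ _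
          _ = ‖p - (ttm c)^[k] (ttm c z)‖ / (‖c‖) ^ k / ‖c‖ := by
              rw [hw'd]
          _ = ‖p - (ttm c)^[k+1] z‖ / (‖c‖) ^ (k+1) := by
              rw [Function.iterate_succ_apply, div_div, ← pow_succ]
    · refine ⟨g1 c w', g1_mem_K h h2 hw'K, ?_, ?_⟩
      · rw [Function.iterate_succ_apply, ttm_g1 h (h2 _ hw'K), hw'it]
      · calc ‖g1 c w' - z‖ = ‖g1 c w' - g1 c (ttm c z)‖ := by rw [hb]
          _ = ‖w' - ttm c z‖ / ‖c‖ := g1_dist c _ _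
          _ = ‖p - (ttm c)^[k] (ttm c z)‖ / (‖c‖) ^ k / ‖c‖ := by
              rw [hw'd]
          _ = ‖p - (ttm c)^[k+1] z‖ / (‖c‖) ^ (k+1) := by
              rw [Function.iterate_succ_apply, div_div, ← pow_succ]

lemma second_point {c : ℂ} (h : 1 < ‖c‖) (h2 : ∀ z ∈ ttmK c, -1 < z.im) :
    g1 c 0 ∈ ttmK c ∧ g1 c 0 ≠ 0 := by
  refine ⟨g1_mem_K h h2 (zero_mem_K c), ?_⟩
  rw [g1]
  simp only [map_zero, zero_sub]
  intro hzero
  rw [div_eq_zero_iff] at hzero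
  rcases hzero with h1 | h1
  · rw [neg_eq_zero] at h1
    exact two_ne_zero (by simpa [Complex.ext_iff] using h1 : (2:ℂ) = 0)
  · exact cne h h1

lemma exists_ne_in_K {c : ℂ} (h : 1 < ‖c‖) (h2 : ∀ z ∈ ttmK c, -1 < z.im)
    (w : ℂ) : ∃ p ∈ ttmK c, p ≠ w := by
  obtain ⟨hm, hne⟩ := second_point h h2
  by_cases hw : w = 0
  · exact ⟨g1 c 0, hm, by rw [hw]; exact hne⟩
  · exact ⟨0, zero_mem_K c, fun h0 => hw h0.symm⟩

lemma dist_le_two_R {c : ℂ} (h : 1 < ‖c‖) {a b : ℂ}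
    (ha : a ∈ ttmK c) (hb : b ∈ ttmK c) : ‖a - b‖ ≤ 2 * R c := by
  calc ‖a - b‖ ≤ ‖a‖ + ‖b‖ := by
        simpa using norm_sub_le a b
    _ ≤ 2 * R c := by linarith [abs_le_R h ha, abs_le_R h hb]

lemma K_perfect {c : ℂ} (h : 1 < ‖c‖) (h2 : ∀ z ∈ ttmK c, -1 < z.im) :
    Perfect (ttmK c) := by
  refine ⟨K_closed h, ?_⟩
  intro z hz
  rw [accPt_iff_nhds]
  intro U hU
  obtain ⟨ε, hε, hball⟩ := Metric.mem_nhds_iff.mp hU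
  obtain ⟨n, hn⟩ := pow_unbounded_of_one_lt (2 * R c / ε) h
  obtain ⟨p, hpK, hpne⟩ := exists_ne_in_K h h2 ((ttm c)^[n] z)
  obtain ⟨z', hz'K, hz'it, hz'd⟩ := pullback h h2 n z hz p hpK
  have hcpow : (0:ℝ) < (‖c‖) ^ n := by positivity
  have hd : ‖z' - z‖ < ε := by
    rw [hz'd]
    rw [div_lt_iff₀ hcpow]
    have h1 : ‖p - (ttm c)^[n] z‖ ≤ 2 * R c :=
      dist_le_two_R h hpK (iterate_mem_K hz n)
    have h2' : 2 * R c < ε * (‖c‖) ^ n := by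
      rw [div_lt_iff₀ hε] at hn
      calc 2 * R c < (‖c‖) ^ n * ε := hn
        _ = ε * (‖c‖) ^ n := mul_comm _ _
    linarith
  refine ⟨z', ⟨hball ?_, hz'K⟩, ?_⟩
  · rw [Metric.mem_ball, Complex.dist_eq]; exact hd
  · intro heq
    rw [heq] at hz'it
    exact hpne hz'it.symm

end TTMaux

namespace TTMaux

lemma expand_step {c : ℂ} (h : 1 < ‖c‖) (h2 : ∀ z ∈ ttmK c, -1 < z.im)
    {t : Set ℂ} (hts : t ⊆ ttmK c) (htp : IsPreconnected t) :
    ∀ a ∈ t, ∀ b ∈ t,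
      ‖ttm c a - ttm c b‖ = ‖c‖ * ‖a - b‖ := by
  set U : Set ℂ := {z | -1 < (c * z).im} with hU
  set V : Set ℂ := {z | (c * z).im < -1} with hV
  have hUopen : IsOpen U := isOpen_lt continuous_const
    (Complex.continuous_im.comp (continuous_const.mul continuous_id))
  have hVopen : IsOpen V := isOpen_lt
    (Complex.continuous_im.comp (continuous_const.mul continuous_id)) continuous_const
  have hdisj : Disjoint U V := by
    rw [Set.disjoint_left]
    intro z hzU hzV
    have hA : -1 < (c * z).im := hzU
    have hB : (c * z).im < -1 := hzV
    linarith
  have hcover : t ⊆ U ∪ V := by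
    intro z hzt
    rcases lt_or_gt_of_ne (im_ne h2 (hts hzt)) with hlt | hgt
    · exact Or.inr hlt
    · exact Or.inl hgt
  have haux : ∀ a ∈ t, ∀ b ∈ t,
      (a ∈ U → b ∈ U → ‖ttm c a - ttm c b‖ = ‖c‖ * ‖a - b‖) := by
    intro a _ b _ haU hbU
    have hfa : ttm c a = c * a := by rw [ttm, if_pos (le_of_lt haU)]
    have hfb : ttm c b = c * b := by rw [ttm, if_pos (le_of_lt hbU)]
    rw [hfa, hfb, ← mul_sub, norm_mul]
  rcases htp.subset_or_subset hUopen hVopen hdisj hcover with hsub | hsub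
  · intro a ha b hb
    exact haux a ha b hb (hsub ha) (hsub hb)
  · intro a ha b hb
    have hfa : ttm c a = (starRingEnd ℂ) (c * a) - 2 * Complex.I := by
      rw [ttm, if_neg (not_le.mpr (hsub ha))]
    have hfb : ttm c b = (starRingEnd ℂ) (c * b) - 2 * Complex.I := by
      rw [ttm, if_neg (not_le.mpr (hsub hb))]
    have : ttm c a - ttm c b = (starRingEnd ℂ) (c * (a - b)) := by
      rw [hfa, hfb, mul_sub, map_sub]; ring
    rw [this, Complex.norm_conj, norm_mul]

lemma expand_iter {c : ℂ} (h : 1 < ‖c‖) (h2 : ∀ z ∈ ttmK c, -1 < z.im) :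
    ∀ n : ℕ, ∀ t : Set ℂ, t ⊆ ttmK c → IsPreconnected t → ∀ a ∈ t, ∀ b ∈ t,
      ‖(ttm c)^[n] a - (ttm c)^[n] b‖
        = (‖c‖) ^ n * ‖a - b‖ := by
  intro n
  induction n with
  | zero => intro t _ _ a _ b _; simp
  | succ k ih =>
    intro t hts htp a ha b hb
    have himsub : ttm c '' t ⊆ ttmK c := by
      rintro w ⟨x, hxt, rfl⟩
      exact ttm_mem_K (hts hxt)
    have himpre : IsPreconnected (ttm c '' t) :=
      htp.image _ (continuous_ttm c).continuousOn
    have h1 := ih (ttm c '' t) himsub himpre (ttm c a) ⟨a, ha, rfl⟩ (ttm c b) ⟨b, hb, rfl⟩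
    rw [Function.iterate_succ_apply, Function.iterate_succ_apply, h1,
      expand_step h h2 hts htp a ha b hb, pow_succ]
    ring

lemma K_totally_disconnected {c : ℂ} (h : 1 < ‖c‖)
    (h2 : ∀ z ∈ ttmK c, -1 < z.im) : IsTotallyDisconnected (ttmK c) := by
  intro t hts htp
  intro x hx y hy
  by_contra hne
  have hd : 0 < ‖x - y‖ := by
    rw [norm_pos_iff]
    exact sub_ne_zero.mpr hne
  obtain ⟨n, hn⟩ := pow_unbounded_of_one_lt (2 * R c / ‖x - y‖) h
  have hlt : 2 * R c < (‖c‖) ^ n * ‖x - y‖ := by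
    rw [div_lt_iff₀ hd] at hn; linarith
  have heq := expand_iter h h2 n t hts htp x hx y hy
  have hle : ‖(ttm c)^[n] x - (ttm c)^[n] y‖ ≤ 2 * R c :=
    dist_le_two_R h (iterate_mem_K (hts hx) n) (iterate_mem_K (hts hy) n)
  rw [heq] at hle
  linarith

lemma K_not_countable {c : ℂ} (h : 1 < ‖c‖)
    (h2 : ∀ z ∈ ttmK c, -1 < z.im) : ¬ (ttmK c).Countable := by
  intro hcount
  obtain ⟨f, hrange, _, hinj⟩ :=
    (K_perfect h h2).exists_nat_bool_injection ⟨0, zero_mem_K c⟩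
  have hrc : (Set.range f).Countable := hcount.mono hrange
  have : Countable (ℕ → Bool) := by
    have hc2 : Countable ↥(Set.range f) := hrc.to_subtype
    exact Function.Injective.countable
      (f := fun s => (⟨f s, Set.mem_range_self s⟩ : ↥(Set.range f)))
      (fun a b hab => hinj (congrArg Subtype.val hab))
  obtain ⟨g, hg⟩ := exists_injective_nat (ℕ → Bool)
  classical
  have hinj2 : Function.Injective (fun s : Set ℕ => (fun n => decide (n ∈ s) : ℕ → Bool)) := by
    intro s s' hss
    ext n
    have := congrFun hss n
    simpa using this
  exact Function.cantor_injective (g ∘ _) (hg.comp hinj2)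

end TTMaux

theorem ttmK_above_folding_line_cantor (c : ℂ) (h : 1 < ‖c‖)
    (h2 : ∀ z ∈ ttmK c, -1 < z.im) :
    IsTotallyDisconnected (ttmK c) ∧ ¬ (ttmK c).Countable ∧
    ¬ Set.Countable {C : Set ℂ | ∃ z ∈ ttmK c, C = connectedComponentIn (ttmK c) z} := by
  have htd := TTMaux.K_totally_disconnected h h2
  have hnc := TTMaux.K_not_countable h h2
  refine ⟨htd, hnc, ?_⟩
  intro hScount
  apply hnc
  have hcomp : ∀ z ∈ ttmK c, connectedComponentIn (ttmK c) z = {z} := by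
    intro z hz
    have hsub : (connectedComponentIn (ttmK c) z).Subsingleton :=
      htd _ (connectedComponentIn_subset _ _) isPreconnected_connectedComponentIn
    exact hsub.eq_singleton_of_mem (mem_connectedComponentIn hz)
  have hKsub : ttmK c ⊆ ⋃₀ {C : Set ℂ | ∃ z ∈ ttmK c, C = connectedComponentIn (ttmK c) z} := by
    intro z hz
    exact ⟨connectedComponentIn (ttmK c) z, ⟨z, hz, rfl⟩, mem_connectedComponentIn hz⟩
  refine Set.Countable.mono hKsub ?_
  apply hScount.sUnion
  rintro C ⟨z, hz, rfl⟩
  rw [hcomp z hz]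
  exact Set.countable_singleton z
end

section
/- Suppose |c| > 1. Then the filled-in Julia set K(c) is a connected set if and only if K(c) ∩ ℍ⁺ is a connected set, where ℍ⁺ = {z ∈ ℂ : Im(z) ≥ -1}. -/
open Complex Bornology Set

lemma two_I_im : (2 * Complex.I).im = 2 := by simp

lemma conj_two_I : (starRingEnd ℂ) (2 * Complex.I) = -(2 * Complex.I) := by
  apply Complex.ext <;> simp

lemma conj_sub_two_I (w : ℂ) (h : w.im = -1) : (starRingEnd ℂ) w - 2 * Complex.I = w := by
  apply Complex.ext
  · simp
  · rw [Complex.sub_im, Complex.conj_im, two_I_im, h]; norm_num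

lemma ttm_of_ge (c z : ℂ) (h : -1 ≤ (c * z).im) : ttm c z = c * z := if_pos h

lemma ttm_of_le (c z : ℂ) (h : (c * z).im ≤ -1) :
    ttm c z = (starRingEnd ℂ) (c * z) - 2 * Complex.I := by
  unfold ttm
  rcases lt_or_eq_of_le h with h' | h'
  · rw [if_neg (by linarith)]
  · rw [if_pos (le_of_eq h'.symm), conj_sub_two_I _ h']

lemma ttm_eq_min (c z : ℂ) :
    ttm c z = c * z - 2 * Complex.I * ((min ((c * z).im + 1) 0 : ℝ) : ℂ) := by
  unfold ttm
  by_cases h : -1 ≤ (c * z).im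
  · rw [if_pos h, min_eq_right (by linarith)]; simp
  · rw [if_neg h]; push_neg at h
    rw [min_eq_left (by linarith)]
    have hsc := Complex.sub_conj (c * z)
    push_cast at hsc ⊢
    linear_combination -hsc

lemma ttm_continuous (c : ℂ) : Continuous (ttm c) := by
  have : (ttm c) = fun z => c * z - 2 * Complex.I * ((min ((c * z).im + 1) 0 : ℝ) : ℂ) :=
    funext (ttm_eq_min c)
  rw [this]
  fun_prop

lemma im_ttm (c z : ℂ) : -1 ≤ (ttm c z).im := by
  by_cases h : -1 ≤ (c * z).im
  · rw [ttm_of_ge c z h]; exact h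
  · push_neg at h
    rw [ttm_of_le c z h.le, Complex.sub_im, Complex.conj_im, two_I_im]
    linarith

lemma ttm_mem_iff (c : ℂ) (z : ℂ) : z ∈ ttmK c ↔ ttm c z ∈ ttmK c := by
  have hr : Set.range (fun n : ℕ => (ttm c)^[n] z)
      = insert z (Set.range fun n : ℕ => (ttm c)^[n] (ttm c z)) := by
    ext w
    simp only [Set.mem_range, Set.mem_insert_iff]
    constructor
    · rintro ⟨n, rfl⟩
      cases n with
      | zero => left; rfl
      | succ n => right; exact ⟨n, (Function.iterate_succ_apply (ttm c) n z).symm⟩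
    · rintro (rfl | ⟨n, rfl⟩)
      · exact ⟨0, rfl⟩
      · exact ⟨n + 1, Function.iterate_succ_apply (ttm c) n z⟩
  simp only [ttmK, Set.mem_setOf_eq, hr, Bornology.isBounded_insert]

lemma fixed_mem (c : ℂ) (z : ℂ) (h : ttm c z = z) : z ∈ ttmK c := by
  have hiter : ∀ n : ℕ, (ttm c)^[n] z = z := fun n => Function.iterate_fixed h n
  have hrange : (Set.range fun n : ℕ => (ttm c)^[n] z) = {z} := by
    ext w
    simp only [Set.mem_range, Set.mem_singleton_iff]
    constructor
    · rintro ⟨n, rfl⟩; exact hiter n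
    · rintro rfl; exact ⟨0, hiter 0⟩
  rw [ttmK, Set.mem_setOf_eq, hrange]
  exact Bornology.isBounded_singleton

lemma zero_mem_ttmK (c : ℂ) : (0 : ℂ) ∈ ttmK c := by
  apply fixed_mem
  rw [ttm_of_ge c 0 (by simp)]
  simp

lemma ttm_image (c : ℂ) (hc : c ≠ 0) :
    ttm c '' ttmK c = ttmK c ∩ {z : ℂ | -1 ≤ z.im} := by
  ext w
  constructor
  · rintro ⟨z, hz, rfl⟩
    exact ⟨(ttm_mem_iff c z).1 hz, im_ttm c z⟩
  · rintro ⟨hw, hw'⟩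
    have hw' : -1 ≤ w.im := hw'
    have hcw : c * (w / c) = w := mul_div_cancel₀ w hc |>.symm ▸ by field_simp
    refine ⟨w / c, ?_, ?_⟩
    · rw [ttm_mem_iff, ttm_of_ge c _ (by rw [hcw]; exact hw'), hcw]
      exact hw
    · rw [ttm_of_ge c _ (by rw [hcw]; exact hw'), hcw]

lemma exists_fixed (c : ℂ) (h : 1 < ‖c‖) :
    ∃ z₂ : ℂ, z₂ ∈ ttmK c ∧ -1 < z₂.im ∧ (c * z₂).im < -1 := by
  set d : ℝ := Complex.normSq c - 1 with hd_def
  have hd : 0 < d := by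
    have h1 : 1 < Complex.normSq c := by
      rw [Complex.normSq_eq_norm_sq]; nlinarith
    rw [hd_def]; linarith
  have hc1 : c ≠ 1 := by
    intro h1; rw [h1] at h; simp at h
  set z₂ : ℂ := 2 * Complex.I * (1 - (starRingEnd ℂ) c) / (d : ℂ) with hz₂_def
  have hdC : (d : ℂ) = c * (starRingEnd ℂ) c - 1 := by
    rw [hd_def]; push_cast; rw [Complex.mul_conj]
  have hdne : (d : ℂ) ≠ 0 := Complex.ofReal_ne_zero.mpr hd.ne'
  have key : c * z₂ = (starRingEnd ℂ) z₂ - 2 * Complex.I := by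
    rw [hz₂_def, map_div₀, map_mul, conj_two_I, map_sub, Complex.conj_conj,
      Complex.conj_ofReal, map_one]
    field_simp
    linear_combination hdC
  have hz₂im : z₂.im = 2 * (1 - c.re) / d := by
    rw [hz₂_def, Complex.div_ofReal_im]
    congr 1
    simp [Complex.mul_im, Complex.mul_re]
  have hns : 0 < (c.re - 1) ^ 2 + c.im ^ 2 := by
    have hpos := Complex.normSq_pos.mpr (sub_ne_zero.mpr hc1)
    have h2 : Complex.normSq (c - 1) = (c.re - 1) ^ 2 + c.im ^ 2 := by
      rw [Complex.normSq_apply, Complex.sub_re, Complex.sub_im, Complex.one_re,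
        Complex.one_im]
      ring
    rw [h2] at hpos
    exact hpos
  have him : -1 < z₂.im := by
    rw [hz₂im, lt_div_iff₀ hd]
    have hdd : d = c.re ^ 2 + c.im ^ 2 - 1 := by
      rw [hd_def, Complex.normSq_apply]; ring
    nlinarith
  have hcim : (c * z₂).im < -1 := by
    rw [key, Complex.sub_im, Complex.conj_im, two_I_im]
    linarith
  refine ⟨z₂, ?_, him, hcim⟩
  apply fixed_mem
  rw [ttm_of_le c z₂ hcim.le, key, map_sub, Complex.conj_conj, conj_two_I]
  ring

theorem ttmK_connected_iff_inter_upper_half_plane_connected (c : ℂ)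
    (h : 1 < ‖c‖) :
    IsConnected (ttmK c) ↔ IsConnected (ttmK c ∩ {z : ℂ | -1 ≤ z.im}) := by
  have hc : c ≠ 0 := by
    intro h0; rw [h0] at h; simp at h; linarith
  constructor
  · intro hK
    rw [← ttm_image c hc]
    exact hK.image _ (ttm_continuous c).continuousOn
  · intro hE
    set E := ttmK c ∩ {z : ℂ | -1 ≤ z.im} with hEdef
    obtain ⟨p, hpE, hpL⟩ : ∃ p, p ∈ E ∧ p.im = -1 := by
      by_contra hno
      push_neg at hno
      obtain ⟨z₂, hz₂K, hz₂im, hz₂c⟩ := exists_fixed c h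
      have h0E : (0:ℂ) ∈ E := ⟨zero_mem_ttmK c, by norm_num [Set.mem_setOf_eq]⟩
      have hz₂E : z₂ ∈ E := ⟨hz₂K, le_of_lt hz₂im⟩
      have hcont : Continuous (fun z : ℂ => (c * z).im) :=
        Complex.continuous_im.comp (continuous_const.mul continuous_id)
      have hU : IsOpen {z : ℂ | -1 < (c*z).im} := isOpen_lt continuous_const hcont
      have hV : IsOpen {z : ℂ | (c*z).im < -1} := isOpen_lt hcont continuous_const
      have hsub : E ⊆ {z : ℂ | -1 < (c*z).im} ∪ {z : ℂ | (c*z).im < -1} := by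
        intro z hz
        rcases lt_or_ge (-1 : ℝ) (c*z).im with h1 | h1
        · exact Or.inl h1
        rcases lt_or_eq_of_le h1 with h1' | h1'
        · exact Or.inr h1'
        exfalso
        have hczE : c * z ∈ E := by
          have hm := (ttm_mem_iff c z).1 hz.1
          rw [ttm_of_ge c z h1'.ge] at hm
          exact ⟨hm, h1'.ge⟩
        exact hno _ hczE h1'
      obtain ⟨x, hxE, hx1, hx2⟩ :=
        hE.isPreconnected _ _ hU hV hsub ⟨0, h0E, by norm_num [Set.mem_setOf_eq]⟩
          ⟨z₂, hz₂E, hz₂c⟩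
      simp only [Set.mem_setOf_eq] at hx1 hx2
      linarith
    have hS₁ : IsConnected ((fun w : ℂ => w / c) '' E) :=
      hE.image _ (continuous_id.div_const c).continuousOn
    have hS₂ : IsConnected ((fun w : ℂ => ((starRingEnd ℂ) w - 2*Complex.I) / c) '' E) :=
      hE.image _ ((Complex.continuous_conj.sub continuous_const).div_const c).continuousOn
    have hun : ttmK c = (fun w : ℂ => w / c) '' E
        ∪ (fun w : ℂ => ((starRingEnd ℂ) w - 2*Complex.I) / c) '' E := by
      ext z
      constructor
      · intro hz
        rcases le_or_gt (-1:ℝ) (c*z).im with h1 | h1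
        · left
          refine ⟨c*z, ?_, mul_div_cancel_left₀ z hc⟩
          have hm := (ttm_mem_iff c z).1 hz
          rw [ttm_of_ge c z h1] at hm
          exact ⟨hm, h1⟩
        · right
          refine ⟨(starRingEnd ℂ) (c*z) - 2*Complex.I, ?_, ?_⟩
          · have hm := (ttm_mem_iff c z).1 hz
            rw [ttm_of_le c z h1.le] at hm
            refine ⟨hm, ?_⟩
            show -1 ≤ ((starRingEnd ℂ) (c*z) - 2*Complex.I).im
            rw [Complex.sub_im, Complex.conj_im, two_I_im]
            linarith
          · show ((starRingEnd ℂ) ((starRingEnd ℂ) (c*z) - 2*Complex.I) - 2*Complex.I) / c = z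
            rw [map_sub, Complex.conj_conj, conj_two_I]
            have heq : c * z - -(2 * Complex.I) - 2 * Complex.I = c * z := by ring
            rw [heq]
            exact mul_div_cancel_left₀ z hc
      · rintro (⟨w, ⟨hwK, hwIm⟩, rfl⟩ | ⟨w, ⟨hwK, hwIm⟩, rfl⟩)
        · have hwIm' : -1 ≤ w.im := hwIm
          have hcw : c * (w / c) = w := by field_simp
          rw [ttm_mem_iff, ttm_of_ge c _ (by rw [hcw]; exact hwIm'), hcw]
          exact hwK
        · have hwIm' : -1 ≤ w.im := hwIm
          have hcw : c * (((starRingEnd ℂ) w - 2*Complex.I) / c)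
              = (starRingEnd ℂ) w - 2*Complex.I := by field_simp
          have him : (c * (((starRingEnd ℂ) w - 2*Complex.I) / c)).im ≤ -1 := by
            rw [hcw, Complex.sub_im, Complex.conj_im, two_I_im]
            linarith
          rw [ttm_mem_iff, ttm_of_le c _ him, hcw, map_sub, Complex.conj_conj, conj_two_I]
          have heq : w - -(2 * Complex.I) - 2 * Complex.I = w := by ring
          rw [heq]
          exact hwK
    rw [hun]
    refine IsConnected.union ⟨p / c, ?_, ?_⟩ hS₁ hS₂
    · exact ⟨p, hpE, rfl⟩
    · refine ⟨p, hpE, ?_⟩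
      show ((starRingEnd ℂ) p - 2*Complex.I) / c = p / c
      rw [conj_sub_two_I p hpL]
end

section
/- If |c| > √2, then the filled-in Julia set K(c) has two-dimensional Lebesgue measure zero (as a subset of ℂ ≅ ℝ²). -/
open MeasureTheory Complex

lemma ttm_abs_ge (c z : ℂ) : ‖c‖ * ‖z‖ - 2 ≤ ‖ttm c z‖ := by
  unfold ttm
  split_ifs with hIm
  · rw [norm_mul]; linarith [norm_nonneg (c * z)]
  · have h2i : ‖2 * Complex.I‖ = 2 := by simp
    have h1 : ‖c * z‖ - 2 ≤
        ‖(starRingEnd ℂ) (c * z) - 2 * Complex.I‖ := by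
      calc ‖c * z‖ - 2
          = ‖(starRingEnd ℂ) (c * z)‖ - ‖2 * Complex.I‖ := by
            rw [Complex.norm_conj, h2i]
        _ ≤ _ := by
            simpa using
              norm_sub_norm_le ((starRingEnd ℂ) (c * z)) (2 * Complex.I)
    rw [norm_mul] at h1
    linarith

lemma ttm_escape (c : ℂ) {R : ℝ} (hrR : ‖c‖ * R - 2 = R) (z : ℂ) (n : ℕ) :
    (‖c‖) ^ n * (‖z‖ - R) + R ≤ ‖(ttm c)^[n] z‖ := by
  set r := ‖c‖ with hr
  induction n with
  | zero => simp
  | succ n ih =>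
    rw [Function.iterate_succ_apply']
    have h1 := ttm_abs_ge c ((ttm c)^[n] z)
    have hr0 : (0 : ℝ) ≤ r := norm_nonneg c
    have h2 : r * (r ^ n * (‖z‖ - R) + R) - 2 ≤
        r * ‖(ttm c)^[n] z‖ - 2 := by
      have := mul_le_mul_of_nonneg_left ih hr0
      linarith
    calc r ^ (n + 1) * (‖z‖ - R) + R
        = r * (r ^ n * (‖z‖ - R) + R) - 2 := by linear_combination -hrR
      _ ≤ r * ‖(ttm c)^[n] z‖ - 2 := h2
      _ ≤ ‖ttm c ((ttm c)^[n] z)‖ := h1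

lemma ttmK_subset_ball (c : ℂ) (hc : 1 < ‖c‖) :
    ttmK c ⊆ Metric.closedBall 0 (2 / (‖c‖ - 1)) := by
  intro z hz
  set r := ‖c‖ with hr
  set R := 2 / (r - 1) with hR
  have h0 : r - 1 ≠ 0 := by simp only [hr]; intro h'; rw [sub_eq_zero] at h'; rw [← h'] at hc; linarith
  have hrR : r * R - 2 = R := by rw [hR]; field_simp; ring
  simp only [Metric.mem_closedBall, dist_zero_right]
  by_contra hzR
  push_neg at hzR
  have hzb : Bornology.IsBounded (Set.range fun n : ℕ => (ttm c)^[n] z) := hz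
  obtain ⟨M, hM⟩ := isBounded_iff_forall_norm_le.1 hzb
  have hM' : ∀ n : ℕ, r ^ n * (‖z‖ - R) + R ≤ M := by
    intro n
    exact le_trans (ttm_escape c hrR z n) (by simpa using hM _ ⟨n, rfl⟩)
  obtain ⟨n, hn⟩ := pow_unbounded_of_one_lt ((M - R) / (‖z‖ - R)) hc
  have hpos : 0 < ‖z‖ - R := by linarith
  have := hM' n
  rw [div_lt_iff₀ hpos] at hn
  nlinarith

lemma ttm_preimage_subset (c : ℂ) (s : Set ℂ) :
    ttm c ⁻¹' s ⊆ ((c * ·) ⁻¹' s) ∪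
      ((fun z => (starRingEnd ℂ) (c * z) - 2 * Complex.I) ⁻¹' s) := by
  intro z hz
  have hz' : ttm c z ∈ s := hz
  unfold ttm at hz'
  split_ifs at hz' with h
  · exact Or.inl hz'
  · exact Or.inr hz'

lemma det_mul_complex (c : ℂ) :
    LinearMap.det (Algebra.lmul ℝ ℂ c) = Complex.normSq c := by
  rw [← Algebra.norm_apply, Algebra.norm_complex_apply]

lemma volume_preimage_mul (c : ℂ) (hc : c ≠ 0) (s : Set ℂ) :
    volume ((c * ·) ⁻¹' s) = ENNReal.ofReal (Complex.normSq c)⁻¹ * volume s := by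
  have hdet : LinearMap.det (Algebra.lmul ℝ ℂ c) ≠ 0 := by
    rw [det_mul_complex]
    exact (Complex.normSq_pos.2 hc).ne'
  have := Measure.addHaar_preimage_linearMap (volume : Measure ℂ) hdet s
  have heq : (Algebra.lmul ℝ ℂ c) ⁻¹' s = (c * ·) ⁻¹' s := rfl
  rw [heq, det_mul_complex] at this
  rw [this, _root_.abs_of_nonneg (inv_nonneg.2 (Complex.normSq_nonneg c))]

lemma volume_preimage_branch2 (c : ℂ) (hc : c ≠ 0) (s : Set ℂ) :
    volume ((fun z => (starRingEnd ℂ) (c * z) - 2 * Complex.I) ⁻¹' s) =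
      ENNReal.ofReal (Complex.normSq c)⁻¹ * volume s := by
  have hdecomp : (fun z : ℂ => (starRingEnd ℂ) (c * z) - 2 * Complex.I) ⁻¹' s =
      (c * ·) ⁻¹' ((starRingEnd ℂ) ⁻¹' ((· + (-(2 * Complex.I))) ⁻¹' s)) := by
    ext z
    simp [sub_eq_add_neg]
  rw [hdecomp, volume_preimage_mul c hc]
  congr 1
  have hconj : volume ((starRingEnd ℂ) ⁻¹' ((· + (-(2 * Complex.I))) ⁻¹' s)) =
      volume ((· + (-(2 * Complex.I))) ⁻¹' s) := by
    have hmp : MeasurePreserving (Complex.conjLIE : ℂ → ℂ) volume volume :=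
      Complex.conjLIE.measurePreserving
    have : ((starRingEnd ℂ) : ℂ → ℂ) = (Complex.conjLIE : ℂ → ℂ) := rfl
    rw [this]
    exact hmp.measure_preimage_emb
      Complex.conjLIE.toHomeomorph.measurableEmbedding _
  rw [hconj]
  exact measure_preimage_add_right volume _ s

theorem ttmK_measure_zero (c : ℂ) (h : Real.sqrt 2 < ‖c‖) :
    MeasureTheory.volume (ttmK c) = 0 := by
  have h2 : (Real.sqrt 2) ^ 2 = 2 := Real.sq_sqrt (by norm_num)
  have hsqrt1 : (1 : ℝ) < Real.sqrt 2 := by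
    nlinarith [Real.sqrt_nonneg 2]
  have hc1 : 1 < ‖c‖ := lt_trans hsqrt1 h
  have hc0 : c ≠ 0 := by
    intro hc; rw [hc] at hc1; simp at hc1; linarith
  have hnormSq : 2 < Complex.normSq c := by
    rw [← Complex.sq_norm]
    nlinarith [Real.sqrt_nonneg 2]
  -- finiteness
  have hfin : volume (ttmK c) < ⊤ := by
    calc volume (ttmK c) ≤ volume (Metric.closedBall (0 : ℂ) (2 / (‖c‖ - 1))) :=
          measure_mono (ttmK_subset_ball c hc1)
      _ < ⊤ := measure_closedBall_lt_top
  -- invariance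
  have hinv : ttmK c ⊆ ttm c ⁻¹' (ttmK c) := by
    intro z hz
    simp only [Set.mem_preimage, ttmK, Set.mem_setOf_eq] at hz ⊢
    refine hz.subset ?_
    rintro _ ⟨n, rfl⟩
    exact ⟨n + 1, (Function.iterate_succ_apply (ttm c) n z).symm⟩
  -- the key measure inequality
  set m := volume (ttmK c) with hm
  have hkey : m ≤ ENNReal.ofReal (2 * (Complex.normSq c)⁻¹) * m := by
    calc m ≤ volume (ttm c ⁻¹' (ttmK c)) := measure_mono hinv
      _ ≤ volume ((c * ·) ⁻¹' (ttmK c)) +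
          volume ((fun z => (starRingEnd ℂ) (c * z) - 2 * Complex.I) ⁻¹' (ttmK c)) :=
        le_trans (measure_mono (ttm_preimage_subset c _)) (measure_union_le _ _)
      _ = ENNReal.ofReal (Complex.normSq c)⁻¹ * m + ENNReal.ofReal (Complex.normSq c)⁻¹ * m := by
        rw [volume_preimage_mul c hc0, volume_preimage_branch2 c hc0]
      _ = ENNReal.ofReal (2 * (Complex.normSq c)⁻¹) * m := by
        rw [← two_mul, ← ENNReal.ofReal_ofNat 2, ← mul_assoc, ← ENNReal.ofReal_mul (by norm_num)]
  have hlt1 : ENNReal.ofReal (2 * (Complex.normSq c)⁻¹) < 1 := by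
    rw [ENNReal.ofReal_lt_one, mul_inv_lt_iff₀ (by linarith)]
    linarith
  by_contra hne
  have hmpos : 0 < m := pos_iff_ne_zero.2 hne
  have : m < m := by
    calc m ≤ ENNReal.ofReal (2 * (Complex.normSq c)⁻¹) * m := hkey
      _ < 1 * m := by
        rw [mul_comm _ m, mul_comm 1 m]; exact ENNReal.mul_lt_mul_right hne hfin.ne hlt1
      _ = m := one_mul m
  exact lt_irrefl _ this
end

section
/- Suppose |c| > 1. Then the twisted tent map f_c has exactly two fixed points, namely 0 and ℓ_0 = 2i·(1 - conj(c))/(|c|² - 1); that is, {z ∈ ℂ : f_c(z) = z} = {0, ℓ_0}. -/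
/-- The nonzero fixed point of the twisted tent map. -/
noncomputable def ell0 (c : ℂ) : ℂ :=
  2 * Complex.I * (1 - (starRingEnd ℂ) c) / (((‖c‖ : ℂ)) ^ 2 - 1)

theorem ttm_fixed_points (c : ℂ) (h : 1 < ‖c‖) :
    {z : ℂ | ttm c z = z} = {0, ell0 c} := by
  have hn : (1:ℝ) < Complex.normSq c := by
    have := Complex.sq_norm c
    nlinarith [norm_nonneg c]
  have hdr : (Complex.normSq c : ℝ) - 1 ≠ 0 := by linarith
  have hmc : (((‖c‖ : ℂ)) ^ 2 : ℂ) = c * (starRingEnd ℂ) c := by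
    rw [Complex.mul_conj]
    push_cast [← Complex.sq_norm]
    ring
  have hd : (((‖c‖ : ℂ)) ^ 2 - 1 : ℂ) ≠ 0 := by
    intro hh
    have : (((‖c‖)^2 - 1 : ℝ) : ℂ) = 0 := by push_cast; linear_combination hh
    rw [Complex.ofReal_eq_zero] at this
    nlinarith
  have hd' : c * (starRingEnd ℂ) c - 1 ≠ 0 := by rw [← hmc]; exact hd
  have hc1 : c - 1 ≠ 0 := by
    intro hh
    have : c = 1 := by linear_combination hh
    simp [this] at h
  -- the key imaginary part computation
  have hform : c * ell0 c = 2 * Complex.I * (c - (Complex.normSq c : ℂ)) /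
      ((Complex.normSq c : ℂ) - 1) := by
    rw [ell0]
    have h2 : (((‖c‖ : ℂ)) ^ 2 : ℂ) = (Complex.normSq c : ℂ) := by
      push_cast [← Complex.sq_norm]; ring
    rw [h2]
    have hd2 : ((Complex.normSq c : ℂ)) - 1 ≠ 0 := by
      rw [← h2]; exact hd
    field_simp
    have : (Complex.normSq c : ℂ) = c * (starRingEnd ℂ) c := by
      rw [← h2, hmc]
    rw [this]; ring
  have hIm : (c * ell0 c).im < -1 := by
    rw [hform]
    have him : (2 * Complex.I * (c - (Complex.normSq c : ℂ)) /
        ((Complex.normSq c : ℂ) - 1)).im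
        = 2 * (c.re - Complex.normSq c) / (Complex.normSq c - 1) := by
      have hcast : ((Complex.normSq c : ℂ)) - 1 = ((Complex.normSq c - 1 : ℝ) : ℂ) := by
        push_cast; ring
      rw [hcast, Complex.div_ofReal_im]
      simp only [Complex.mul_im, Complex.mul_re, Complex.sub_re, Complex.sub_im,
        Complex.ofReal_re, Complex.ofReal_im, Complex.I_re, Complex.I_im, Complex.one_re,
        Complex.one_im, Complex.re_ofNat, Complex.im_ofNat]
      ring
    rw [him]
    rw [div_lt_iff₀ (by linarith)]
    have hsq : Complex.normSq c = c.re^2 + c.im^2 := by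
      simp [Complex.normSq_apply]; ring
    nlinarith [sq_nonneg (c.re - 1), sq_nonneg c.im]
  -- the fixed point equation at ell0
  have hfix : (starRingEnd ℂ) (c * ell0 c) - 2 * Complex.I = ell0 c := by
    rw [ell0, map_mul, map_div₀]
    simp only [map_sub, map_mul, map_one, map_pow, Complex.conj_I, Complex.conj_conj,
      Complex.conj_ofReal, map_ofNat]
    field_simp
    rw [hmc]
    ring
  ext z
  simp only [Set.mem_setOf_eq, Set.mem_insert_iff, Set.mem_singleton_iff, ttm]
  constructor
  · intro hz
    by_cases hcond : -1 ≤ (c * z).im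
    · rw [if_pos hcond] at hz
      left
      have : (c - 1) * z = 0 := by linear_combination hz
      rcases mul_eq_zero.mp this with h1 | h1
      · exact absurd h1 hc1
      · exact h1
    · rw [if_neg hcond] at hz
      right
      have hconj : (starRingEnd ℂ) z = c * z + 2 * Complex.I := by
        have := congrArg (starRingEnd ℂ) hz
        simp only [map_sub, map_mul, Complex.conj_conj, Complex.conj_I, map_ofNat] at this
        linear_combination -this
      have hkey : (c * (starRingEnd ℂ) c - 1) * z = 2 * Complex.I * (1 - (starRingEnd ℂ) c) := by
        rw [map_mul, hconj] at hz
        linear_combination hz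
      rw [ell0, hmc, eq_div_iff hd']
      linear_combination hkey
  · intro hz
    rcases hz with rfl | rfl
    · simp
    · rw [if_neg (not_le.mpr hIm)]
      exact hfix
end

section
/- Suppose |c| > 1 and Im(c) > 0, and let ℓ_0 = 2i·(1 - conj(c))/(|c|² - 1) and ℓ_1 = ℓ_0/c. Then the straight line segment L_0 joining ℓ_0 and ℓ_1 is contained in the filled-in Julia set K(c) if and only if Re(c) ≥ -1 and |c| ≤ √2. -/
open Complex

noncomputable def ttKap (c : ℂ) : ℝ := normSq (1 - c) / (normSq c - 1)

lemma tt_d_pos {c : ℂ} (h1 : 1 < normSq c) : 0 < normSq c - 1 := by linarith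

lemma tt_c_ne_zero {c : ℂ} (hb : 0 < c.im) : c ≠ 0 := by
  intro h; rw [h] at hb; simp at hb

lemma tt_e_pos {c : ℂ} (hb : 0 < c.im) : 0 < normSq (1 - c) := by
  apply normSq_pos.2
  intro h
  have : (1 - c).im = 0 := by rw [h]; simp
  simp [sub_im] at this
  linarith

lemma tt_kap_pos {c : ℂ} (h1 : 1 < normSq c) (hb : 0 < c.im) : 0 < ttKap c :=
  div_pos (tt_e_pos hb) (tt_d_pos h1)

lemma tt_ell0_mul_d {c : ℂ} (h1 : 1 < normSq c) :
    ell0 c * ((normSq c - 1 : ℝ) : ℂ) = 2 * I * (1 - (starRingEnd ℂ) c) := by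
  have hd : ((normSq c - 1 : ℝ) : ℂ) ≠ 0 := by
    simp only [ne_eq, ofReal_eq_zero]
    exact ne_of_gt (tt_d_pos h1)
  have habs : ((‖c‖ : ℂ)) ^ 2 - 1 = ((normSq c - 1 : ℝ) : ℂ) := by
    rw [← ofReal_pow, Complex.sq_norm]
    push_cast
    ring
  rw [ell0, habs, div_mul_cancel₀ _ hd]

lemma tt_c_mul_ell0 {c : ℂ} (h1 : 1 < normSq c) :
    c * ell0 c = ell0 c - 2 * (ttKap c : ℂ) * I := by
  have hd : ((normSq c - 1 : ℝ) : ℂ) ≠ 0 := by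
    simp only [ne_eq, ofReal_eq_zero]
    exact ne_of_gt (tt_d_pos h1)
  have hkd : (ttKap c : ℂ) * ((normSq c - 1 : ℝ) : ℂ) = ((normSq (1 - c) : ℝ) : ℂ) := by
    rw [← ofReal_mul, ttKap, div_mul_cancel₀]
    exact ne_of_gt (tt_d_pos h1)
  have key : (c * ell0 c - (ell0 c - 2 * (ttKap c : ℂ) * I)) * ((normSq c - 1 : ℝ) : ℂ) = 0 := by
    have h0 := tt_ell0_mul_d h1
    have hmc : (1 - c) * (starRingEnd ℂ) (1 - c) = ((normSq (1 - c) : ℝ) : ℂ) :=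
      Complex.mul_conj _
    have hconj : (starRingEnd ℂ) (1 - c) = 1 - (starRingEnd ℂ) c := by
      rw [map_sub, map_one]
    calc (c * ell0 c - (ell0 c - 2 * (ttKap c : ℂ) * I)) * ((normSq c - 1 : ℝ) : ℂ)
        = (c - 1) * (ell0 c * ((normSq c - 1 : ℝ) : ℂ))
          + 2 * I * ((ttKap c : ℂ) * ((normSq c - 1 : ℝ) : ℂ)) := by ring
      _ = (c - 1) * (2 * I * (1 - (starRingEnd ℂ) c)) + 2 * I * ((normSq (1 - c) : ℝ) : ℂ) := by
          rw [h0, hkd]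
      _ = 2 * I * (((normSq (1 - c) : ℝ) : ℂ) - (1 - c) * (starRingEnd ℂ) (1 - c)) := by
          rw [hconj]; ring
      _ = 0 := by rw [hmc]; ring
  rcases mul_eq_zero.1 key with h | h
  · exact sub_eq_zero.1 h
  · exact absurd h hd

lemma tt_ell0_im {c : ℂ} (h1 : 1 < normSq c) : (ell0 c).im = ttKap c - 1 := by
  have hd : normSq c - 1 ≠ 0 := ne_of_gt (tt_d_pos h1)
  have h0 := tt_ell0_mul_d h1
  have him : (ell0 c * ((normSq c - 1 : ℝ) : ℂ)).im = (ell0 c).im * (normSq c - 1) := by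
    simp [Complex.mul_im]
  have hrhs : (2 * I * (1 - (starRingEnd ℂ) c)).im = 2 * (1 - c.re) := by
    simp [Complex.mul_im, Complex.mul_re, Complex.sub_re, Complex.sub_im]
  have : (ell0 c).im * (normSq c - 1) = 2 * (1 - c.re) := by rw [← him, h0, hrhs]
  have he : normSq (1 - c) - (normSq c - 1) = 2 - 2 * c.re := by
    simp [normSq_apply, Complex.sub_re, Complex.sub_im]; ring
  have hk : ttKap c - 1 = (normSq (1 - c) - (normSq c - 1)) / (normSq c - 1) := by
    rw [ttKap]; field_simp
  rw [hk, he]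
  field_simp
  linarith [this]

lemma tt_fold_ell0 {c : ℂ} (h1 : 1 < normSq c) :
    (starRingEnd ℂ) (c * ell0 c) - 2 * I = ell0 c := by
  rw [tt_c_mul_ell0 h1]
  apply Complex.ext
  · simp
  · simp [tt_ell0_im h1]
    ring

lemma tt_im_c_mul {c : ℂ} (h1 : 1 < normSq c) (η : ℂ) :
    (c * (ell0 c + η)).im = (c * η).im - 1 - ttKap c := by
  have : c * (ell0 c + η) = (ell0 c - 2 * (ttKap c : ℂ) * I) + c * η := by
    rw [mul_add, tt_c_mul_ell0 h1]
  rw [this]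
  simp [Complex.add_im, Complex.sub_im, tt_ell0_im h1]
  ring

lemma tt_step_lin {c : ℂ} (h1 : 1 < normSq c) {η : ℂ} (hη : ttKap c ≤ (c * η).im) :
    ttm c (ell0 c + η) = ell0 c + (c * η - 2 * (ttKap c : ℂ) * I) := by
  rw [ttm, if_pos]
  · rw [mul_add, tt_c_mul_ell0 h1]; ring
  · rw [tt_im_c_mul h1]; linarith

lemma tt_step_fold {c : ℂ} (h1 : 1 < normSq c) {η : ℂ} (hη : (c * η).im < ttKap c) :
    ttm c (ell0 c + η) = ell0 c + (starRingEnd ℂ) (c * η) := by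
  rw [ttm, if_neg]
  · have hx : (starRingEnd ℂ) (c * (ell0 c + η)) - 2 * I
        = ((starRingEnd ℂ) (c * ell0 c) - 2 * I) + (starRingEnd ℂ) (c * η) := by
      rw [mul_add, map_add]; ring
    rw [hx, tt_fold_ell0 h1]
  · rw [tt_im_c_mul h1]; linarith

lemma tt_step_re {c : ℂ} (h1 : 1 < normSq c) (η : ℂ) :
    (ttm c (ell0 c + η)).re = (ell0 c).re + (c * η).re := by
  rcases lt_or_ge ((c * η).im) (ttKap c) with h | h
  · rw [tt_step_fold h1 h]; simp
  · rw [tt_step_lin h1 h]; simp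
lemma tt_master {c : ℂ} (h1 : 1 < normSq c) (hb : 0 < c.im) (z : ℂ) :
    (ttm c (ttm c z)).re - (ell0 c).re ≤ normSq c * (z.re - (ell0 c).re) := by
  set η := z - ell0 c with hη
  have hz : z = ell0 c + η := by rw [hη]; ring
  have hre : z.re - (ell0 c).re = η.re := by rw [hη]; simp
  rw [hz]
  rw [show (ell0 c + η).re - (ell0 c).re = η.re by simp]
  rcases lt_or_ge ((c * η).im) (ttKap c) with h | h
  · -- fold first: exact equality
    rw [tt_step_fold h1 h, tt_step_re h1]
    have : (c * (starRingEnd ℂ) (c * η)).re = normSq c * η.re := by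
      simp [Complex.mul_re, Complex.mul_im, Complex.conj_re, Complex.conj_im, normSq_apply]
      ring
    rw [this]
    simp
  · -- linear first
    rw [tt_step_lin h1 h, tt_step_re h1]
    have hexp : (c * (c * η - 2 * (ttKap c : ℂ) * I)).re
        = normSq c * η.re - 2 * c.im * ((c * η).im - ttKap c) := by
      simp [Complex.mul_re, Complex.mul_im, normSq_apply]
      ring
    rw [hexp]
    nlinarith [mul_nonneg hb.le (sub_nonneg.2 h)]

lemma tt_K_fwd {c : ℂ} {z : ℂ} (hz : z ∈ ttmK c) : ttm c z ∈ ttmK c := by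
  simp only [ttmK, Set.mem_setOf_eq] at hz ⊢
  apply Bornology.IsBounded.subset hz
  rintro _ ⟨n, rfl⟩
  exact ⟨n + 1, by simp [Function.iterate_succ_apply]⟩

lemma tt_K_iter {c : ℂ} {z : ℂ} (hz : z ∈ ttmK c) (n : ℕ) : (ttm c)^[n] z ∈ ttmK c := by
  induction n with
  | zero => simpa using hz
  | succ n ih => rw [Function.iterate_succ_apply']; exact tt_K_fwd ih

lemma tt_notinK {c : ℂ} (h1 : 1 < normSq c) (hb : 0 < c.im) {z : ℂ}
    (hz : z.re < (ell0 c).re) : z ∉ ttmK c := by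
  intro hK
  simp only [ttmK, Set.mem_setOf_eq] at hK
  obtain ⟨C, hC⟩ := isBounded_iff_forall_norm_le.1 hK
  have hCn : ∀ n : ℕ, -C ≤ ((ttm c)^[n] z).re := by
    intro n
    have h1' := hC _ ⟨n, rfl⟩
    have h2 := Complex.abs_re_le_norm ((ttm c)^[n] z)
    exact neg_le_of_abs_le (le_trans h2 h1')
  have key : ∀ n : ℕ, ((ttm c)^[2 * n] z).re - (ell0 c).re
      ≤ (normSq c) ^ n * (z.re - (ell0 c).re) := by
    intro n
    induction n with
    | zero => simp
    | succ n ih =>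
        have hit : (ttm c)^[2 * (n + 1)] z = ttm c (ttm c ((ttm c)^[2 * n] z)) := by
          rw [show 2 * (n + 1) = (2 * n) + 1 + 1 by ring,
            Function.iterate_succ_apply', Function.iterate_succ_apply']
        rw [hit]
        calc (ttm c (ttm c ((ttm c)^[2 * n] z))).re - (ell0 c).re
            ≤ normSq c * (((ttm c)^[2 * n] z).re - (ell0 c).re) := tt_master h1 hb _
          _ ≤ normSq c * ((normSq c) ^ n * (z.re - (ell0 c).re)) := by
              apply mul_le_mul_of_nonneg_left ih (by positivity)
          _ = (normSq c) ^ (n + 1) * (z.re - (ell0 c).re) := by ring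
  obtain ⟨n, hn⟩ := pow_unbounded_of_one_lt ((C + |(ell0 c).re|) / ((ell0 c).re - z.re)) h1
  have hD : 0 < (ell0 c).re - z.re := by linarith
  have hbig : C + |(ell0 c).re| < (normSq c) ^ n * ((ell0 c).re - z.re) := by
    rwa [div_lt_iff₀ hD] at hn
  have h2n := key n
  have h3 := hCn (2 * n)
  have : (normSq c) ^ n * (z.re - (ell0 c).re)
      = -((normSq c) ^ n * ((ell0 c).re - z.re)) := by ring
  rw [this] at h2n
  have h4 : (ell0 c).re ≤ |(ell0 c).re| := le_abs_self _
  linarith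
lemma tt_c_mul_dlt {c : ℂ} (h1 : 1 < normSq c) (hb : 0 < c.im) :
    c * (ell0 c / c - ell0 c) = 2 * (ttKap c : ℂ) * I := by
  rw [mul_sub, mul_div_cancel₀ _ (tt_c_ne_zero hb), tt_c_mul_ell0 h1]
  ring

lemma tt_fV {c : ℂ} (h1 : 1 < normSq c) (hb : 0 < c.im) (ha : -1 ≤ c.re) {ν : ℝ}
    (hν0 : 0 ≤ ν) (hνκ : ν ≤ ttKap c) :
    ttm c (ell0 c + (-(ν : ℂ) * I)) = ell0 c + (ν : ℂ) * (starRingEnd ℂ) c * I := by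
  have him : (c * (-(ν : ℂ) * I)).im = -(ν * c.re) := by
    simp [Complex.mul_im, Complex.mul_re]
    ring
  rcases lt_or_ge ((c * (-(ν : ℂ) * I)).im) (ttKap c) with h | h
  · rw [tt_step_fold h1 h]
    congr 1
    rw [show c * (-(ν : ℂ) * I) = -(ν : ℂ) * c * I by ring, map_mul, map_mul]
    simp [Complex.conj_I, Complex.conj_ofReal]
    try ring
  · have heq : -(ν * c.re) = ttKap c := by
      apply le_antisymm _ (him ▸ h)
      have : ν * (-c.re) ≤ ν * 1 := by
        apply mul_le_mul_of_nonneg_left _ hν0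
        linarith
      linarith
    rw [tt_step_lin h1 (him ▸ h)]
    congr 1
    apply Complex.ext
    · simp [Complex.mul_re, Complex.mul_im]
      ring
    · simp [Complex.mul_re, Complex.mul_im]
      linarith [heq]

lemma tt_mid_step0 {c : ℂ} (h1 : 1 < normSq c) (hb : 0 < c.im) :
    ttm c (ell0 c + ((1 / 2 : ℝ) • (ell0 c / c - ell0 c)))
      = ell0 c + (-(ttKap c : ℂ) * I) := by
  have hcη : c * ((1 / 2 : ℝ) • (ell0 c / c - ell0 c)) = (ttKap c : ℂ) * I := by
    rw [mul_smul_comm, tt_c_mul_dlt h1 hb, Complex.real_smul]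
    push_cast
    ring
  have him : (c * ((1 / 2 : ℝ) • (ell0 c / c - ell0 c))).im = ttKap c := by
    rw [hcη]; simp
  rw [tt_step_lin h1 (le_of_eq him.symm)]
  rw [hcη]
  congr 1
  ring

lemma tt_neckA {c : ℂ} (h1 : 1 < normSq c) (hb : 0 < c.im) (ha : c.re < -1) :
    ((ttm c)^[3] (ell0 c + ((1 / 2 : ℝ) • (ell0 c / c - ell0 c)))).re < (ell0 c).re := by
  have hκ := tt_kap_pos h1 hb
  have hit : ∀ w : ℂ, (ttm c)^[3] w = ttm c (ttm c (ttm c w)) := by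
    intro w
    rw [show (3:ℕ) = 1+1+1 by norm_num]
    simp [Function.iterate_succ_apply', Function.iterate_one]
  rw [hit, tt_mid_step0 h1 hb]
  -- step 1: linear branch since κ ≤ -κ a
  have him1 : (c * (-(ttKap c : ℂ) * I)).im = -(ttKap c * c.re) := by
    simp [Complex.mul_im, Complex.mul_re]
    ring
  have hcond1 : ttKap c ≤ (c * (-(ttKap c : ℂ) * I)).im := by
    rw [him1]
    have : ttKap c * 1 ≤ ttKap c * (-c.re) := by
      apply mul_le_mul_of_nonneg_left _ hκ.le
      linarith
    linarith
  rw [tt_step_lin h1 hcond1, tt_step_re h1]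
  have hre : (c * (c * (-(ttKap c : ℂ) * I) - 2 * (ttKap c : ℂ) * I)).re
      = 2 * ttKap c * c.im * (c.re + 1) := by
    simp [Complex.mul_re, Complex.mul_im]
    ring
  rw [hre]
  nlinarith [mul_pos (mul_pos (by linarith : (0:ℝ) < 2 * ttKap c) hb) (by linarith : (0:ℝ) < -(c.re + 1))]

lemma tt_neckB {c : ℂ} (h1 : 1 < normSq c) (hb : 0 < c.im) (ha : -1 ≤ c.re)
    (hs : 2 < normSq c) :
    ((ttm c)^[4] (ell0 c + ((1 / 2 : ℝ) • (ell0 c / c - ell0 c)))).re < (ell0 c).re := by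
  have hκ := tt_kap_pos h1 hb
  have hit : ∀ w : ℂ, (ttm c)^[4] w = ttm c (ttm c (ttm c (ttm c w))) := by
    intro w
    rw [show (4:ℕ) = 1+1+1+1 by norm_num]
    simp [Function.iterate_succ_apply', Function.iterate_one]
  rw [hit, tt_mid_step0 h1 hb]
  -- step 1: V point with ν = κ
  have hstep1 : ttm c (ell0 c + (-(ttKap c : ℂ) * I))
      = ell0 c + (ttKap c : ℂ) * (starRingEnd ℂ) c * I := tt_fV h1 hb ha hκ.le le_rfl
  rw [hstep1]
  -- step 2: linear branch since Im = κ * s ≥ κ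
  have hcc : c * ((ttKap c : ℂ) * (starRingEnd ℂ) c * I) = (ttKap c : ℂ) * (normSq c : ℝ) * I := by
    rw [show c * ((ttKap c : ℂ) * (starRingEnd ℂ) c * I) = (ttKap c : ℂ) * (c * (starRingEnd ℂ) c) * I by ring,
      Complex.mul_conj]
  have him2 : (c * ((ttKap c : ℂ) * (starRingEnd ℂ) c * I)).im = ttKap c * normSq c := by
    rw [hcc]
    simp
  have hcond2 : ttKap c ≤ (c * ((ttKap c : ℂ) * (starRingEnd ℂ) c * I)).im := by
    rw [him2]
    nlinarith
  rw [tt_step_lin h1 hcond2, tt_step_re h1]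
  have hre : (c * (c * ((ttKap c : ℂ) * (starRingEnd ℂ) c * I) - 2 * (ttKap c : ℂ) * I)).re
      = -(ttKap c * (normSq c - 2) * c.im) := by
    rw [hcc]
    simp [Complex.mul_re, Complex.mul_im]
    ring
  rw [hre]
  nlinarith [mul_pos (mul_pos hκ (by linarith : (0:ℝ) < normSq c - 2)) hb]
lemma tt_spine_inv {c : ℂ} (h1 : 1 < normSq c) (hb : 0 < c.im) (ha : -1 ≤ c.re)
    (hs2 : normSq c ≤ 2) {z : ℂ}
    (hz : (∃ t : ℝ, t ∈ Set.Icc (0:ℝ) 1 ∧ z = ell0 c + t • (ell0 c / c - ell0 c)) ∨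
          (∃ ν : ℝ, ν ∈ Set.Icc (0:ℝ) (ttKap c) ∧ z = ell0 c + (-(ν:ℝ) * I))) :
    (∃ t : ℝ, t ∈ Set.Icc (0:ℝ) 1 ∧ ttm c z = ell0 c + t • (ell0 c / c - ell0 c)) ∨
    (∃ ν : ℝ, ν ∈ Set.Icc (0:ℝ) (ttKap c) ∧ ttm c z = ell0 c + (-(ν:ℝ) * I)) := by
  have hκ := tt_kap_pos h1 hb
  have hc0 := tt_c_ne_zero hb
  rcases hz with ⟨t, ⟨ht0, ht1⟩, rfl⟩ | ⟨ν, ⟨hν0, hνκ⟩, rfl⟩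
  · -- on L₀
    have hcη : c * (t • (ell0 c / c - ell0 c)) = ((2 * ttKap c * t : ℝ) : ℂ) * I := by
      rw [mul_smul_comm, tt_c_mul_dlt h1 hb, Complex.real_smul]
      push_cast
      ring
    have him : (c * (t • (ell0 c / c - ell0 c))).im = 2 * ttKap c * t := by
      rw [hcη]; simp
    rcases lt_or_ge t (1/2) with ht | ht
    · -- fold branch
      have hlt : (c * (t • (ell0 c / c - ell0 c))).im < ttKap c := by
        rw [him]; nlinarith
      right
      refine ⟨2 * ttKap c * t, ⟨by positivity, by nlinarith⟩, ?_⟩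
      rw [tt_step_fold h1 hlt, hcη]
      have hconj : (starRingEnd ℂ) (((2 * ttKap c * t : ℝ) : ℂ) * I)
          = -(2 * ttKap c * t : ℝ) * I := by
        rw [map_mul, Complex.conj_ofReal, Complex.conj_I]
        ring
      rw [hconj]
      try push_cast
      try ring_nf
    · -- linear branch
      have hge : ttKap c ≤ (c * (t • (ell0 c / c - ell0 c))).im := by
        rw [him]; nlinarith
      right
      refine ⟨2 * ttKap c * (1 - t), ⟨by nlinarith, by nlinarith⟩, ?_⟩
      rw [tt_step_lin h1 hge, hcη]
      congr 1
      push_cast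
      ring
  · -- on V
    left
    have hstep := tt_fV h1 hb ha hν0 hνκ
    refine ⟨ν * normSq c / (2 * ttKap c), ⟨by positivity, ?_⟩, ?_⟩
    · rw [div_le_one (by positivity)]
      nlinarith
    · rw [show ell0 c + (-(ν:ℝ) * I) = ell0 c + (-(ν:ℂ) * I) by push_cast; ring, hstep]
      congr 1
      apply mul_left_cancel₀ hc0
      rw [mul_smul_comm, tt_c_mul_dlt h1 hb, Complex.real_smul,
        show c * ((ν:ℂ) * (starRingEnd ℂ) c * I) = (ν:ℂ) * (c * (starRingEnd ℂ) c) * I by ring,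
        Complex.mul_conj]
      have hκC : ((ttKap c : ℝ) : ℂ) ≠ 0 := by
        simp only [ne_eq, ofReal_eq_zero]
        exact ne_of_gt hκ
      push_cast
      field_simp

lemma tt_spine_sub_K {c : ℂ} (h1 : 1 < normSq c) (hb : 0 < c.im) (ha : -1 ≤ c.re)
    (hs2 : normSq c ≤ 2) {z : ℂ}
    (hz : (∃ t : ℝ, t ∈ Set.Icc (0:ℝ) 1 ∧ z = ell0 c + t • (ell0 c / c - ell0 c)) ∨
          (∃ ν : ℝ, ν ∈ Set.Icc (0:ℝ) (ttKap c) ∧ z = ell0 c + (-(ν:ℝ) * I))) :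
    z ∈ ttmK c := by
  have hκ := tt_kap_pos h1 hb
  set R : ℝ := ‖ell0 c‖ + ‖ell0 c / c - ell0 c‖ + ttKap c with hR
  have hmem : ∀ w : ℂ,
      ((∃ t : ℝ, t ∈ Set.Icc (0:ℝ) 1 ∧ w = ell0 c + t • (ell0 c / c - ell0 c)) ∨
       (∃ ν : ℝ, ν ∈ Set.Icc (0:ℝ) (ttKap c) ∧ w = ell0 c + (-(ν:ℝ) * I))) → ‖w‖ ≤ R := by
    rintro w (⟨t, ⟨ht0, ht1⟩, rfl⟩ | ⟨ν, ⟨hν0, hνκ⟩, rfl⟩)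
    · calc ‖ell0 c + t • (ell0 c / c - ell0 c)‖
          ≤ ‖ell0 c‖ + ‖t • (ell0 c / c - ell0 c)‖ := norm_add_le _ _
        _ ≤ ‖ell0 c‖ + ‖ell0 c / c - ell0 c‖ + ttKap c := by
            rw [norm_smul]
            have : ‖t‖ ≤ 1 := by rw [Real.norm_eq_abs, abs_le]; constructor <;> linarith
            nlinarith [norm_nonneg (ell0 c / c - ell0 c)]
    · calc ‖ell0 c + (-(ν:ℝ) * I)‖
          ≤ ‖ell0 c‖ + ‖(-(ν:ℝ) * I : ℂ)‖ := norm_add_le _ _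
        _ ≤ R := by
            rw [norm_mul]
            simp only [Complex.norm_I, mul_one, hR]
            have : ‖(-(ν:ℝ) : ℂ)‖ = ν := by
              rw [norm_neg, Complex.norm_real, Real.norm_eq_abs, _root_.abs_of_nonneg hν0]
            rw [this]
            nlinarith [norm_nonneg (ell0 c / c - ell0 c), norm_nonneg (ell0 c / c - ell0 c)]
  have horb : ∀ n : ℕ,
      ((∃ t : ℝ, t ∈ Set.Icc (0:ℝ) 1 ∧ (ttm c)^[n] z = ell0 c + t • (ell0 c / c - ell0 c)) ∨
       (∃ ν : ℝ, ν ∈ Set.Icc (0:ℝ) (ttKap c) ∧ (ttm c)^[n] z = ell0 c + (-(ν:ℝ) * I))) := by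
    intro n
    induction n with
    | zero => simpa using hz
    | succ n ih =>
        rw [Function.iterate_succ_apply']
        exact tt_spine_inv h1 hb ha hs2 ih
  simp only [ttmK, Set.mem_setOf_eq]
  apply Bornology.IsBounded.subset (Metric.isBounded_closedBall (x := (0:ℂ)) (r := R))
  rintro _ ⟨n, rfl⟩
  simp only [Metric.mem_closedBall, dist_zero_right]
  exact hmem _ (horb n)
theorem segment_L0_subset_ttmK_iff (c : ℂ) (h : 1 < ‖c‖) (hb : 0 < c.im) :
    segment ℝ (ell0 c) (ell0 c / c) ⊆ ttmK c ↔
      (-1 ≤ c.re ∧ ‖c‖ ≤ Real.sqrt 2) := by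
  have h1 : 1 < normSq c := by
    rw [← Complex.sq_norm]
    nlinarith [norm_nonneg c]
  have hκ := tt_kap_pos h1 hb
  have hseg_eq := segment_eq_image' ℝ (ell0 c) (ell0 c / c)
  constructor
  · intro hseg
    have hmid : ell0 c + (1 / 2 : ℝ) • (ell0 c / c - ell0 c) ∈ ttmK c := by
      apply hseg
      rw [hseg_eq]
      exact ⟨1/2, ⟨by norm_num, by norm_num⟩, rfl⟩
    have ha : -1 ≤ c.re := by
      by_contra ha
      push_neg at ha
      have h3 := tt_K_iter hmid 3
      exact tt_notinK h1 hb (tt_neckA h1 hb ha) h3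
    refine ⟨ha, ?_⟩
    have hs2 : normSq c ≤ 2 := by
      by_contra hs
      push_neg at hs
      have h4 := tt_K_iter hmid 4
      exact tt_notinK h1 hb (tt_neckB h1 hb ha hs) h4
    rw [Complex.norm_def]
    exact Real.sqrt_le_sqrt hs2
  · rintro ⟨ha, habs⟩
    have hs2 : normSq c ≤ 2 := by
      rw [← Complex.sq_norm]
      nlinarith [norm_nonneg c, Real.sq_sqrt (by norm_num : (0:ℝ) ≤ 2),
        Real.sqrt_nonneg 2]
    intro z hz
    rw [hseg_eq] at hz
    obtain ⟨t, ⟨ht0, ht1⟩, rfl⟩ := hz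
    exact tt_spine_sub_K h1 hb ha hs2
      (Or.inl ⟨t, ⟨ht0, ht1⟩, rfl⟩)
end
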